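/- arXiv:0710.3960 — 4 statements merged into one kernel-verified Lean document; each statement's English description precedes it below -/
import Mathlib

section
/- Let k > 1, let (c_k, …, c_{k-u}) and (a_k, …, a_{k-s}) be integer sequences admissible for k, and let (b_{k-1}, …, b_{k-1-t}) be an integer sequence admissible for k-1. If Σ_{i=0}^{u} C(c_{k-i}, k-i) = Σ_{i=0}^{s} C(a_{k-i}, k-i) + Σ_{i=0}^{t} C(b_{k-1-i}, k-1-i) and c_k - 1 = a_k > b_{k-1}, then Σ_{i=0}^{u} C(c_{k-i}, k+1-i) > Σ_{i=0}^{s} C(a_{k-i}, k+1-i) + Σ_{i=0}^{t} C(b_{k-1-i}, k-i). -/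
/-- Binomial coefficient `C(n, t)` with an integer lower index, `0` when `t < 0`. -/
def chooseZ (n : ℕ) (t : ℤ) : ℕ := if 0 ≤ t then n.choose t.toNat else 0

/-- `Σ_{i=0}^{s} C(a_{k-i}, j-i)`, where `a i` stands for `a_{k-i}`. -/
def cSumZ (a : ℕ → ℕ) (s : ℕ) (j : ℤ) : ℕ :=
  ∑ i ∈ Finset.range (s + 1), chooseZ (a i) (j - i)

/-- `a i` stands for `n_{k-i}`: the sequence `(n_k, …, n_{k-s})` is admissible for `k` iff
`n_k > n_{k-1} > … > n_{k-s} ≥ k-s > 0`. -/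
def Admissible (k s : ℕ) (a : ℕ → ℕ) : Prop :=
  s < k ∧ (∀ i < s, a (i + 1) < a i) ∧ k - s ≤ a s

/-! Part A: the list of "min minus 1" values of m-subsets in colex order, and prefix/suffix sums. -/

def DD : ℕ → ℕ → List ℕ
  | 0, _ => []
  | 1, n => List.range n
  | (m+2), n => if n < m+2 then [] else DD (m+2) (n-1) ++ DD (m+1) (n-1)
termination_by m n => n
decreasing_by all_goals omega

lemma DD_one (n : ℕ) : DD 1 n = List.range n := by rw [DD]

lemma DD_nil {m n : ℕ} (h : n < m) : DD m n = [] := by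
  match m, h with
  | 1, h =>
    rw [DD_one]
    interval_cases n
    rfl
  | (m+2), h => rw [DD]; simp [h]

lemma DD_block {m n : ℕ} (h2 : 2 ≤ m) (hn : m ≤ n) :
    DD m n = DD m (n-1) ++ DD (m-1) (n-1) := by
  obtain ⟨m', rfl⟩ : ∃ m', m = m' + 2 := ⟨m - 2, by omega⟩
  rw [DD]
  simp only [Nat.not_lt.mpr hn, if_false]
  rfl

lemma pasc {n m : ℕ} (hn : 1 ≤ n) (hm : 1 ≤ m) :
    n.choose m = (n-1).choose m + (n-1).choose (m-1) := by
  obtain ⟨n', rfl⟩ : ∃ n', n = n' + 1 := ⟨n - 1, by omega⟩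
  obtain ⟨m', rfl⟩ : ∃ m', m = m' + 1 := ⟨m - 1, by omega⟩
  simp [Nat.choose_succ_succ']
  omega

lemma sum_range_eq (n : ℕ) : (List.range n).sum = n.choose 2 := by
  induction n with
  | zero => rfl
  | succ n ih =>
    rw [List.range_succ, List.sum_append, ih]
    have h2 : (n+1).choose 2 = n.choose 2 + n := by
      have := Nat.choose_succ_succ' n 1
      simp [Nat.choose_one_right] at this ⊢
      omega
    simp only [List.sum_cons, List.sum_nil]
    omega

lemma DD_length : ∀ (n m : ℕ), 1 ≤ m → (DD m n).length = n.choose m := by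
  intro n
  induction n using Nat.strong_induction_on with
  | _ n IH =>
    intro m hm
    match m, hm with
    | 1, _ => simp [DD_one]
    | (m+2), _ =>
      rcases Nat.lt_or_ge n (m+2) with h | h
      · rw [DD_nil h, Nat.choose_eq_zero_of_lt h]; rfl
      · have e : m + 2 - 1 = m + 1 := rfl
        rw [DD_block (by omega) h, List.length_append, e,
          IH (n-1) (by omega) (m+2) (by omega), IH (n-1) (by omega) (m+1) (by omega),
          pasc (n := n) (by omega) (by omega)]
        congr 1

lemma DD_sum : ∀ (n m : ℕ), 1 ≤ m → (DD m n).sum = n.choose (m+1) := by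
  intro n
  induction n using Nat.strong_induction_on with
  | _ n IH =>
    intro m hm
    match m, hm with
    | 1, _ => rw [DD_one, sum_range_eq]
    | (m+2), _ =>
      rcases Nat.lt_or_ge n (m+2) with h | h
      · rw [DD_nil h, Nat.choose_eq_zero_of_lt (by omega)]; rfl
      · have e : m + 2 - 1 = m + 1 := rfl
        rw [DD_block (by omega) h, List.sum_append, e,
          IH (n-1) (by omega) (m+2) (by omega), IH (n-1) (by omega) (m+1) (by omega),
          pasc (n := n) (m := m+3) (by omega) (by omega)]
        congr 1

lemma DD_prefix : ∀ (n' n m : ℕ), 1 ≤ m → n ≤ n' → (DD m n) <+: (DD m n') := by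
  intro n'
  induction n' using Nat.strong_induction_on with
  | _ n' IH =>
    intro n m hm hn
    rcases Nat.eq_or_lt_of_le hn with rfl | hlt
    · exact List.prefix_refl _
    match m, hm with
    | 1, _ =>
      rw [DD_one, DD_one]
      have : List.range n = (List.range n').take n := by
        rw [List.take_range]
        congr 1
        omega
      rw [this]
      exact List.take_prefix _ _
    | (m+2), _ =>
      rcases Nat.lt_or_ge n' (m+2) with h | h
      · rw [DD_nil h, DD_nil (by omega)]
      · rw [DD_block (m := m+2) (by omega) h]
        exact (IH (n'-1) (by omega) n (m+2) (by omega) (by omega)).trans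
          (List.prefix_append _ _)

def pre (m n X : ℕ) : ℕ := ((DD m n).take X).sum
def suf (m n X : ℕ) : ℕ := ((DD m n).drop X).sum

lemma pre_add_suf (m n X : ℕ) (hm : 1 ≤ m) : pre m n X + suf m n X = n.choose (m+1) := by
  rw [pre, suf, List.sum_take_add_sum_drop, DD_sum n m hm]

lemma pre_zero (m n : ℕ) : pre m n 0 = 0 := rfl

lemma pre_total (m n : ℕ) (hm : 1 ≤ m) : pre m n (n.choose m) = n.choose (m+1) := by
  rw [pre, ← DD_length n m hm, List.take_length, DD_sum n m hm]

lemma pre_consist {m n n' X : ℕ} (hm : 1 ≤ m) (hX : X ≤ n.choose m) (hn : n ≤ n') :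
    pre m n X = pre m n' X := by
  obtain ⟨t, ht⟩ := DD_prefix n' n m hm hn
  rw [pre, pre, ← ht, List.take_append_of_le_length]
  rw [DD_length n m hm]; exact hX

/-- prefix sums don't depend on the ambient n; canonical value. -/
def mu (m N : ℕ) : ℕ := pre m (N + m) N

lemma choose_lower (m N : ℕ) (hm : 1 ≤ m) : N ≤ (N + m).choose m := by
  induction N with
  | zero => simp
  | succ N ih =>
    have h1 : (N + 1 + m).choose m = (N + m).choose m + (N + m).choose (m-1) := by
      have := pasc (n := N + 1 + m) (m := m) (by omega) hm
      simpa [show N + 1 + m - 1 = N + m by omega] using this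
    have h2 : 0 < (N + m).choose (m-1) := Nat.choose_pos (by omega)
    omega

lemma pre_eq_mu {m n X : ℕ} (hm : 1 ≤ m) (hX : X ≤ n.choose m) : pre m n X = mu m X := by
  rw [mu]
  rcases Nat.le_total n (X + m) with h | h
  · exact pre_consist hm hX h
  · exact (pre_consist hm (choose_lower m X hm) h).symm

lemma mu_total (m n : ℕ) (hm : 1 ≤ m) : mu m (n.choose m) = n.choose (m+1) := by
  rw [← pre_eq_mu hm (le_refl _), pre_total m n hm]

lemma mu_zero (m : ℕ) : mu m 0 = 0 := rfl

lemma pre_block_left {m n X : ℕ} (hm : 1 ≤ m) (hX : X ≤ (n-1).choose m) (hn : 1 ≤ n) :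
    pre m n X = pre m (n-1) X := (pre_consist hm hX (by omega)).symm

lemma pre_block_right {m n j : ℕ} (hm : 2 ≤ m) (hn : m ≤ n) (hj : j ≤ (n-1).choose (m-1)) :
    pre m n ((n-1).choose m + j) = (n-1).choose (m+1) + pre (m-1) (n-1) j := by
  rw [pre, DD_block hm hn, List.take_append, List.sum_append]
  rw [List.take_of_length_le (by rw [DD_length (n-1) m (by omega)]; omega)]
  rw [DD_length (n-1) m (by omega)]
  rw [DD_sum (n-1) m (by omega)]
  have e : (n-1).choose m + j - (n-1).choose m = j := by omega
  rw [e]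
  rfl

lemma suf_block_right {m n j : ℕ} (hm : 2 ≤ m) (hn : m ≤ n) :
    suf m n ((n-1).choose m + j) = suf (m-1) (n-1) j := by
  rw [suf, DD_block hm hn, List.drop_append]
  rw [List.drop_of_length_le (by rw [DD_length (n-1) m (by omega)]; omega)]
  rw [DD_length (n-1) m (by omega), List.nil_append]
  have e : (n-1).choose m + j - (n-1).choose m = j := by omega
  rw [e]
  rfl

lemma suf_block_left {m n X : ℕ} (hm : 2 ≤ m) (hn : m ≤ n) (hX : X ≤ (n-1).choose m) :
    suf m n X = suf m (n-1) X + (n-1).choose m := by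
  rw [suf, DD_block hm hn,
    List.drop_append_of_le_length (by rw [DD_length (n-1) m (by omega)]; omega)]
  rw [List.sum_append, DD_sum (n-1) (m-1) (by omega), show m - 1 + 1 = m by omega]
  rfl

lemma mu_rep {m n j : ℕ} (hm : 2 ≤ m) (hn : m - 1 ≤ n) (hj : j ≤ n.choose (m-1)) :
    mu m (n.choose m + j) = n.choose (m+1) + mu (m-1) j := by
  have hple : n.choose m + j ≤ (n+1).choose m := by
    have := pasc (n := n+1) (m := m) (by omega) (by omega)
    simp only [Nat.add_sub_cancel] at this
    omega
  have h1 : pre m (n+1) (n.choose m + j) = n.choose (m+1) + pre (m-1) n j := by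
    have := pre_block_right (m := m) (n := n+1) hm (by omega) (by simpa using hj)
    simpa using this
  rw [← pre_eq_mu (by omega) hple, h1, pre_eq_mu (m := m-1) (by omega) hj]

lemma pre_one {n X : ℕ} (hX : X ≤ n) : pre 1 n X = X.choose 2 := by
  rw [pre, DD_one, List.take_range, show X ⊓ n = X by omega, sum_range_eq]

lemma suf_last : ∀ (m n : ℕ), 1 ≤ m → m ≤ n → suf m n (n.choose m - 1) = n - m := by
  intro m
  induction m with
  | zero => omega
  | succ m ih =>
    intro n hm hn
    rcases Nat.lt_or_ge m 1 with h1 | h1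
    · -- m = 0, level 1
      have hm0 : m = 0 := by omega
      subst hm0
      rw [show (0:ℕ)+1 = 1 by rfl, Nat.choose_one_right]
      have htot := pre_add_suf 1 n (n - 1) (by norm_num)
      have hpre : pre 1 n (n - 1) = (n-1).choose 2 := pre_one (by omega)
      have hp := pasc (n := n) (m := 2) (by omega) (by omega)
      rw [show (2:ℕ) - 1 = 1 by rfl, Nat.choose_one_right] at hp
      norm_num at htot
      omega
    · -- level m+1 ≥ 2
      have hone : 1 ≤ (n-1).choose m := Nat.choose_pos (by omega)
      have harg : n.choose (m+1) - 1 = (n-1).choose (m+1) + ((n-1).choose m - 1) := by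
        have := pasc (n := n) (m := m+1) (by omega) (by omega)
        simp only [Nat.add_sub_cancel] at this
        omega
      rw [harg, suf_block_right (by omega) hn, show m + 1 - 1 = m by rfl]
      rw [ih (n-1) h1 (by omega)]
      omega

/-! Part B: binomial helpers -/

lemma choose_two_add (a b : ℕ) : (a+b).choose 2 = a.choose 2 + b.choose 2 + a * b := by
  induction b with
  | zero => simp
  | succ b ih =>
    have h1 : (a+b+1).choose 2 = (a+b).choose 2 + (a+b) := by
      have := Nat.choose_succ_succ' (a+b) 1
      simp [Nat.choose_one_right] at this ⊢
      omega
    have h2 : (b+1).choose 2 = b.choose 2 + b := by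
      have := Nat.choose_succ_succ' b 1
      simp [Nat.choose_one_right] at this ⊢
      omega
    have : a + (b+1) = (a + b) + 1 := by omega
    rw [this, h1, h2, ih]
    ring

lemma choose_step_up {N r : ℕ} (h : 2*r + 1 ≤ N) : N.choose r ≤ N.choose (r+1) := by
  have hid := Nat.choose_succ_right_eq N r
  have hpos : 0 < r + 1 := by omega
  have : N.choose r * (r+1) ≤ N.choose r * (N - r) :=
    Nat.mul_le_mul_left _ (by omega)
  rw [← hid] at this
  exact Nat.le_of_mul_le_mul_right this hpos

lemma choose_step_down {N r : ℕ} (h : N ≤ 2*r + 1) : N.choose (r+1) ≤ N.choose r := by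
  have hid := Nat.choose_succ_right_eq N r
  have hpos : 0 < r + 1 := by omega
  have : N.choose (r+1) * (r+1) ≤ N.choose r * (r+1) := by
    rw [hid]
    exact Nat.mul_le_mul_left _ (by omega)
  exact Nat.le_of_mul_le_mul_right this hpos

lemma choose_mono_upto_half {N : ℕ} : ∀ {i j : ℕ}, i ≤ j → 2*j ≤ N + 1 → N.choose i ≤ N.choose j := by
  intro i j
  induction j with
  | zero => intro h _; interval_cases i; exact le_refl _
  | succ j ih =>
    intro hij hN
    rcases Nat.eq_or_lt_of_le hij with rfl | h
    · exact le_refl _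
    · exact le_trans (ih (by omega) (by omega)) (choose_step_up (by omega))

lemma choose_span {N i j : ℕ} (hij : i ≤ j) (hj : j ≤ N - i) (hiN : i ≤ N) :
    N.choose i ≤ N.choose j := by
  rcases Nat.le_total (2*j) (N+1) with h | h
  · exact choose_mono_upto_half hij h
  · have hjN : j ≤ N := by omega
    have hsym : N.choose (N - j) = N.choose j := Nat.choose_symm hjN
    rw [← hsym]
    exact choose_mono_upto_half (by omega) (by omega)

lemma exists_block {m : ℕ} (hm : 1 ≤ m) : ∀ {s : ℕ}, 1 ≤ s →
    ∃ n, m ≤ n ∧ n.choose m ≤ s ∧ s < (n+1).choose m := by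
  intro s
  induction s with
  | zero => omega
  | succ s ih =>
    intro _
    rcases Nat.lt_or_ge s 1 with hs | hs
    · -- s = 0, target 1
      have hs0 : s = 0 := by omega
      subst hs0
      refine ⟨m, le_refl _, by simp, ?_⟩
      have h1 : (m+1).choose ((m+1) - 1) = (m+1).choose 1 := Nat.choose_symm (by omega)
      simp only [Nat.add_sub_cancel, Nat.choose_one_right] at h1
      omega
    · obtain ⟨n, hn1, hn2, hn3⟩ := ih hs
      rcases Nat.lt_or_ge (s+1) ((n+1).choose m) with h | h
      · exact ⟨n, hn1, by omega, h⟩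
      · have he : s + 1 = (n+1).choose m := by omega
        refine ⟨n+1, by omega, by omega, ?_⟩
        rw [he]
        have : (n+1).choose m < (n+2).choose m := by
          have hp := pasc (n := n+2) (m := m) (by omega) hm
          rw [show n+2-1 = n+1 by omega] at hp
          have : 0 < (n+1).choose (m-1) := Nat.choose_pos (by omega)
          omega
        exact this

/-! Part C: statements of the master inequalities -/

/-- QQ at level m+1: any window not reaching the top of `[0, C(n,m+1))` is strictly smaller
than the terminal window of the same length. -/
def QQs (m : ℕ) : Prop := ∀ n X L, 1 ≤ L → X + L < n.choose (m+1) →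
  pre (m+1) n (X+L) + 1 ≤ pre (m+1) n X + suf (m+1) n (n.choose (m+1) - L)

/-- superadditivity of mu at level m+1 -/
def SUPs (m : ℕ) : Prop := ∀ x y, mu (m+1) x + mu (m+1) y ≤ mu (m+1) (x+y)

/-- GG: terminal windows at level m+2 are strictly below terminal windows at level m+1. -/
def GGs (m : ℕ) : Prop := ∀ n ℓ, 1 ≤ ℓ → ℓ ≤ n.choose (m+2) → ℓ ≤ n.choose (m+1) →
  suf (m+2) n (n.choose (m+2) - ℓ) + 1 ≤ suf (m+1) n (n.choose (m+1) - ℓ)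

/-- mu decreases with the level -/
def INITs (m : ℕ) : Prop := ∀ j, mu (m+2) j ≤ mu (m+1) j

lemma QQle {m : ℕ} (h : QQs m) : ∀ n X L, X + L ≤ n.choose (m+1) →
    pre (m+1) n (X+L) ≤ pre (m+1) n X + suf (m+1) n (n.choose (m+1) - L) := by
  intro n X L hXL
  rcases Nat.lt_or_ge L 1 with hL | hL
  · have : L = 0 := by omega
    subst this
    simp
  rcases Nat.lt_or_ge (X+L) (n.choose (m+1)) with h2 | h2
  · have := h n X L hL h2
    omega
  · have he : X + L = n.choose (m+1) := by omega
    have he2 : n.choose (m+1) - L = X := by omega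
    rw [he, he2, pre_total _ _ (by omega), pre_add_suf _ _ _ (by omega)]

lemma SUPw {m : ℕ} (hS : SUPs m) {n X L : ℕ} (h : X + L ≤ n.choose (m+1)) :
    pre (m+1) n X + mu (m+1) L ≤ pre (m+1) n (X+L) := by
  rw [pre_eq_mu (by omega) (show X ≤ n.choose (m+1) by omega),
    pre_eq_mu (by omega) h]
  exact hS X L

lemma F3gen {m : ℕ} (hS : SUPs m) : ∀ n : ℕ, n.choose (m+3) ≤ mu (m+1) (n.choose (m+2)) := by
  intro n
  induction n with
  | zero => simp [Nat.choose_eq_zero_of_lt]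
  | succ n ih =>
    have hp1 : (n+1).choose (m+2) = n.choose (m+2) + n.choose (m+1) := by
      have := Nat.choose_succ_succ' n (m+1)
      rw [show m+1+1 = m+2 by omega] at this
      omega
    have hp2 : (n+1).choose (m+3) = n.choose (m+3) + n.choose (m+2) := by
      have := Nat.choose_succ_succ' n (m+2)
      rw [show m+2+1 = m+3 by omega] at this
      omega
    have h1 := hS (n.choose (m+2)) (n.choose (m+1))
    have h2 : mu (m+1) (n.choose (m+1)) = n.choose (m+2) := by
      have := mu_total (m+1) n (by omega)
      rwa [show m+1+1 = m+2 by omega] at this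
    rw [hp1, hp2]
    omega

lemma INITgen {m : ℕ} (hS : SUPs m) : INITs m := by
  intro j
  rcases Nat.lt_or_ge j 1 with hj | hj
  · have : j = 0 := by omega
    subst this
    simp [mu_zero]
  obtain ⟨n, hn1, hn2, hn3⟩ := exists_block (m := m+2) (by omega) hj
  have hup : j - n.choose (m+2) ≤ n.choose (m+1) := by
    have h5 := Nat.choose_succ_succ' n (m+1)
    rw [show m+1+1 = m+2 by omega] at h5
    omega
  have hrep : mu (m+2) j = n.choose (m+3) + mu (m+1) (j - n.choose (m+2)) := by
    have := mu_rep (m := m+2) (n := n) (j := j - n.choose (m+2)) (by omega) (by omega)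
      (by simpa using hup)
    rw [show n.choose (m+2) + (j - n.choose (m+2)) = j by omega] at this
    simpa using this
  have h2 := hS (n.choose (m+2)) (j - n.choose (m+2))
  rw [show n.choose (m+2) + (j - n.choose (m+2)) = j by omega] at h2
  have h3 := F3gen hS n
  omega

lemma mu_one (x : ℕ) : mu 1 x = x.choose 2 := by
  rw [mu, pre_one (by omega)]

/-! Base level (m = 0, i.e. levels 1 and 2) -/

lemma QQ0 : QQs 0 := by
  intro n X L hL hXL
  show pre 1 n (X+L) + 1 ≤ pre 1 n X + suf 1 n (n.choose 1 - L)
  rw [Nat.choose_one_right] at hXL ⊢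
  have e1 : pre 1 n (X+L) = (X+L).choose 2 := pre_one (by omega)
  have e2 : pre 1 n X = X.choose 2 := pre_one (by omega)
  have e3 : pre 1 n (n - L) = (n-L).choose 2 := pre_one (by omega)
  have e4 := pre_add_suf 1 n (n-L) (by omega)
  have c1 := choose_two_add X L
  have c2 := choose_two_add (n-L) L
  rw [show n - L + L = n by omega] at c2
  have hmul : X * L + L ≤ (n - L) * L := by
    have h5 := Nat.mul_le_mul_right L (show X + 1 ≤ n - L by omega)
    rw [add_one_mul] at h5
    exact h5
  rw [show (1:ℕ)+1 = 2 from rfl] at e4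
  omega

lemma SUP0 : SUPs 0 := by
  intro x y
  rw [show (0:ℕ)+1 = 1 by rfl, mu_one, mu_one, mu_one]
  have := choose_two_add x y
  omega

lemma GG0 : GGs 0 := by
  intro n ℓ h1 h2 h3
  rw [show (0:ℕ)+2 = 2 by rfl, show (0:ℕ)+1 = 1 by rfl] at *
  rw [Nat.choose_one_right] at h3 ⊢
  have hn2 : 2 ≤ n := by
    by_contra h
    have : n.choose 2 = 0 := Nat.choose_eq_zero_of_lt (by omega)
    omega
  have hp : n.choose 2 = (n-1).choose 2 + (n-1) := by
    have := pasc (n := n) (m := 2) (by omega) (by omega)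
    rw [show (2:ℕ)-1 = 1 by rfl, Nat.choose_one_right] at this
    omega
  rcases Nat.lt_or_ge (n-1) ℓ with hc | hc
  · -- ℓ = n
    have hln : ℓ = n := by omega
    rw [hln]
    rw [hln] at h2
    have hn3 : 3 ≤ n := by
      by_contra hcc
      have hle : n.choose 2 ≤ 1 :=
        le_trans (Nat.choose_le_choose 2 (show n ≤ 2 by omega)) (by norm_num)
      omega
    have harg : n.choose 2 - n = (n-1).choose 2 - 1 := by omega
    have hbl : suf 2 n ((n-1).choose 2 - 1)
        = suf 2 (n-1) ((n-1).choose 2 - 1) + (n-1).choose 2 := by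
      exact suf_block_left (by omega) (by omega) (by omega)
    have hlast : suf 2 (n-1) ((n-1).choose 2 - 1) = (n-1) - 2 :=
      suf_last 2 (n-1) (by omega) (by omega)
    have hr : suf 1 n (n - n) = n.choose 2 := by
      have h9 := pre_add_suf 1 n 0 (by omega)
      rw [pre_zero] at h9
      rw [show n - n = 0 by omega]
      rw [show (1:ℕ)+1 = 2 from rfl] at h9
      omega
    rw [harg, hbl, hlast, hr]
    omega
  · -- ℓ ≤ n - 1
    have harg : n.choose 2 - ℓ = (n-1).choose 2 + (n-1-ℓ) := by omega
    have hbl : suf 2 n ((n-1).choose 2 + (n-1-ℓ)) = suf 1 (n-1) (n-1-ℓ) := by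
      have := suf_block_right (m := 2) (n := n) (j := n-1-ℓ) (by omega) (by omega)
      simpa using this
    have v1 : pre 1 (n-1) (n-1-ℓ) = (n-1-ℓ).choose 2 := pre_one (by omega)
    have v2 := pre_add_suf 1 (n-1) (n-1-ℓ) (by omega)
    have v3 : pre 1 n (n-ℓ) = (n-ℓ).choose 2 := pre_one (by omega)
    have v4 := pre_add_suf 1 n (n-ℓ) (by omega)
    have hp2 : (n-ℓ).choose 2 = (n-1-ℓ).choose 2 + (n-1-ℓ) := by
      have := pasc (n := n-ℓ) (m := 2) (by omega) (by omega)
      rw [show (2:ℕ)-1 = 1 by rfl, Nat.choose_one_right,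
        show n - ℓ - 1 = n - 1 - ℓ by omega] at this
      omega
    rw [show (1:ℕ)+1 = 2 from rfl] at v2 v4
    rw [harg, hbl]
    omega

lemma INIT0 : INITs 0 := INITgen SUP0

/-! lemma R -/

lemma lemR1 (N : ℕ) : N.choose 3 ≤ N.choose 2 + mu 2 (N.choose 2 - N.choose 1) := by
  rcases Nat.lt_or_ge N 6 with h | h
  · have : N.choose 3 ≤ N.choose 2 := choose_step_down (r := 2) (by omega)
    omega
  · have harg : N.choose 2 - N.choose 1 = (N-2).choose 2 + (N-3) := by
      have p1 := pasc (n := N) (m := 2) (by omega) (by omega)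
      have p2 := pasc (n := N-1) (m := 2) (by omega) (by omega)
      rw [show (2:ℕ)-1 = 1 by rfl, Nat.choose_one_right] at p1 p2
      rw [Nat.choose_one_right]
      rw [show N-1-1 = N-2 by omega] at p2
      omega
    have hrep : mu 2 ((N-2).choose 2 + (N-3)) = (N-2).choose 3 + mu 1 (N-3) := by
      have := mu_rep (m := 2) (n := N-2) (j := N-3) (by omega) (by omega)
        (by rw [show (2:ℕ)-1 = 1 by rfl, Nat.choose_one_right]; omega)
      rw [show (2:ℕ)-1 = 1 by rfl] at this
      simpa using this
    rw [harg, hrep, mu_one]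
    have p1 := pasc (n := N) (m := 3) (by omega) (by omega)
    have p2 := pasc (n := N-1) (m := 3) (by omega) (by omega)
    have p3 := pasc (n := N-2) (m := 2) (by omega) (by omega)
    have p4 := pasc (n := N) (m := 2) (by omega) (by omega)
    rw [show (3:ℕ)-1 = 2 by rfl] at p1 p2
    rw [show (2:ℕ)-1 = 1 by rfl, Nat.choose_one_right] at p3 p4
    rw [show N-1-1 = N-2 by omega] at p2
    rw [show N-2-1 = N-3 by omega] at p3
    omega

lemma lemR {p : ℕ} (hGG : GGs (p+1)) (hGG2 : GGs p) (N : ℕ)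
    (hEB : N.choose (p+2) ≤ N.choose (p+3)) :
    N.choose (p+4) ≤ N.choose (p+3) + mu (p+3) (N.choose (p+3) - N.choose (p+2)) := by
  rcases Nat.lt_or_ge N (p+3) with hN | hN
  · have : N.choose (p+4) = 0 := Nat.choose_eq_zero_of_lt (by omega)
    omega
  have hpos : 0 < N.choose (p+2) := Nat.choose_pos (by omega)
  have hbig : 2*(p+2)+1 ≤ N := by
    by_contra hcon
    push_neg at hcon
    have hid := Nat.choose_succ_right_eq N (p+2)
    rw [show p+2+1 = p+3 by omega] at hid
    have : N.choose (p+3) * (p+3) ≤ N.choose (p+2) * (p+2) := by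
      rw [hid]
      exact Nat.mul_le_mul_left _ (by omega)
    nlinarith [hEB, hpos]
  obtain ⟨ν, rfl⟩ : ∃ ν, N = ν + 1 := ⟨N-1, by omega⟩
  have hν2 : 2*(p+2) ≤ ν := by omega
  have hℓ₀pos : 1 ≤ ν.choose (p+1) := Nat.choose_pos (by omega)
  have cond1 : ν.choose (p+1) ≤ ν.choose (p+2) := choose_step_up (by omega)
  have cond2 : ν.choose (p+1) ≤ ν.choose (p+3) := choose_span (by omega) (by omega) (by omega)
  have key1 := hGG ν (ν.choose (p+1)) hℓ₀pos (by rw [show p+1+2 = p+3 by omega]; exact cond2)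
    (by rw [show p+1+1 = p+2 by omega]; exact cond1)
  rw [show p+1+2 = p+3 by omega, show p+1+1 = p+2 by omega] at key1
  have key2 := hGG2 ν (ν.choose (p+1)) hℓ₀pos cond1 (le_refl _)
  rw [show ν.choose (p+1) - ν.choose (p+1) = 0 by omega] at key2
  have key2' : suf (p+1) ν 0 = ν.choose (p+2) := by
    have h9 := pre_add_suf (p+1) ν 0 (by omega)
    rw [pre_zero, show p+1+1 = p+2 by omega] at h9
    omega
  rw [key2'] at key2
  have key3 := pre_add_suf (p+3) ν (ν.choose (p+3) - ν.choose (p+1)) (by omega)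
  rw [show p+3+1 = p+4 by omega] at key3
  have key4 : pre (p+3) ν (ν.choose (p+3) - ν.choose (p+1))
      = mu (p+3) (ν.choose (p+3) - ν.choose (p+1)) :=
    pre_eq_mu (by omega) (by omega)
  have pas1 : (ν+1).choose (p+4) = ν.choose (p+4) + ν.choose (p+3) := by
    have h9 := pasc (n := ν+1) (m := p+4) (by omega) (by omega)
    rw [show ν+1-1 = ν by omega, show p+4-1 = p+3 by omega] at h9
    omega
  have pas2 : (ν+1).choose (p+3) = ν.choose (p+3) + ν.choose (p+2) := by
    have h9 := pasc (n := ν+1) (m := p+3) (by omega) (by omega)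
    rw [show ν+1-1 = ν by omega, show p+3-1 = p+2 by omega] at h9
    omega
  have pas3 : (ν+1).choose (p+2) = ν.choose (p+2) + ν.choose (p+1) := by
    have h9 := pasc (n := ν+1) (m := p+2) (by omega) (by omega)
    rw [show ν+1-1 = ν by omega, show p+2-1 = p+1 by omega] at h9
    omega
  have hx : (ν+1).choose (p+3) - (ν+1).choose (p+2) = ν.choose (p+3) - ν.choose (p+1) := by
    omega
  rw [hx]
  omega

/-! The inductive step for QQ: from level m+1 to level m+2. -/

lemma QQstep {m : ℕ} (hQQ : QQs m) (hGG : GGs m) (hSUP : SUPs m) : QQs (m+1) := by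
  intro n
  induction n using Nat.strong_induction_on with
  | _ n IH =>
    intro X L hL hXL
    rw [show m+1+1 = m+2 by omega] at hXL ⊢
    -- local abbreviation for QQle at level m+2 with smaller ambient n, from the IH
    have hQle : ∀ n' X' L', n' < n → X' + L' ≤ n'.choose (m+2) →
        pre (m+2) n' (X'+L') ≤ pre (m+2) n' X' + suf (m+2) n' (n'.choose (m+2) - L') := by
      intro n' X' L' hn' h'
      rcases Nat.lt_or_ge L' 1 with h0 | h0
      · have : L' = 0 := by omega
        subst this
        simp
      rcases Nat.lt_or_ge (X'+L') (n'.choose (m+2)) with h2 | h2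
      · have := IH n' hn' X' L' h0 (by rw [show m+1+1 = m+2 by omega]; exact h2)
        rw [show m+1+1 = m+2 by omega] at this
        omega
      · have he : X' + L' = n'.choose (m+2) := by omega
        have he2 : n'.choose (m+2) - L' = X' := by omega
        rw [he, he2, pre_total _ _ (by omega), pre_add_suf _ _ _ (by omega)]
    have hn : m + 3 ≤ n := by
      by_contra hcc
      push_neg at hcc
      rcases Nat.lt_or_ge n (m+2) with h | h
      · have : n.choose (m+2) = 0 := Nat.choose_eq_zero_of_lt h
        omega
      · have : n = m + 2 := by omega
        rw [this, Nat.choose_self] at hXL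
        omega
    have hpasc : n.choose (m+2) = (n-1).choose (m+2) + (n-1).choose (m+1) := by
      have h9 := pasc (n := n) (m := m+2) (by omega) (by omega)
      rw [show m+2-1 = m+1 by omega] at h9
      omega
    have htotA : pre (m+2) (n-1) X + suf (m+2) (n-1) X = (n-1).choose (m+3) := by
      have := pre_add_suf (m+2) (n-1) X (by omega)
      rw [show m+2+1 = m+3 by omega] at this
      exact this
    rcases le_or_gt L ((n-1).choose (m+1)) with hLB | hLB
    · -- case L ≤ B
      have hsufR : suf (m+2) n (n.choose (m+2) - L)
          = suf (m+1) (n-1) ((n-1).choose (m+1) - L) := by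
        have h9 := suf_block_right (m := m+2) (n := n) (j := (n-1).choose (m+1) - L)
          (by omega) (by omega)
        rw [show m+2-1 = m+1 by omega] at h9
        rw [show (n-1).choose (m+2) + ((n-1).choose (m+1) - L) = n.choose (m+2) - L
          by omega] at h9
        exact h9
      rcases le_or_gt (X + L) ((n-1).choose (m+2)) with h1b | hXA
      · -- 1b : window within the first block
        have e1 : pre (m+2) n (X+L) = pre (m+2) (n-1) (X+L) :=
          pre_block_left (by omega) (by omega) (by omega)
        have e2 : pre (m+2) n X = pre (m+2) (n-1) X :=
          pre_block_left (by omega) (by omega) (by omega)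
        have h1 := hQle (n-1) X L (by omega) h1b
        have h2 := hGG (n-1) L hL (by omega) hLB
        omega
      rcases le_or_gt ((n-1).choose (m+2)) X with hXge | hXlt
      · -- 1a : window within the second block
        have e1 : pre (m+2) n (X+L) = (n-1).choose (m+3)
            + pre (m+1) (n-1) (X + L - (n-1).choose (m+2)) := by
          have h9 := pre_block_right (m := m+2) (n := n)
            (j := X + L - (n-1).choose (m+2)) (by omega) (by omega)
            (by rw [show m+2-1 = m+1 by omega]; omega)
          rw [show m+2-1 = m+1 by omega, show m+2+1 = m+3 by omega] at h9
          rw [show (n-1).choose (m+2) + (X + L - (n-1).choose (m+2)) = X + L by omega] at h9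
          exact h9
        have e2 : pre (m+2) n X = (n-1).choose (m+3)
            + pre (m+1) (n-1) (X - (n-1).choose (m+2)) := by
          have h9 := pre_block_right (m := m+2) (n := n)
            (j := X - (n-1).choose (m+2)) (by omega) (by omega)
            (by rw [show m+2-1 = m+1 by omega]; omega)
          rw [show m+2-1 = m+1 by omega, show m+2+1 = m+3 by omega] at h9
          rw [show (n-1).choose (m+2) + (X - (n-1).choose (m+2)) = X by omega] at h9
          exact h9
        have h1 := hQQ (n-1) (X - (n-1).choose (m+2)) L hL
          (by rw [show m+1 = m+1 by rfl]; omega)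
        rw [show X - (n-1).choose (m+2) + L = X + L - (n-1).choose (m+2) by omega] at h1
        omega
      · -- 1c : straddling window
        have e1 : pre (m+2) n (X+L) = (n-1).choose (m+3)
            + pre (m+1) (n-1) (X + L - (n-1).choose (m+2)) := by
          have h9 := pre_block_right (m := m+2) (n := n)
            (j := X + L - (n-1).choose (m+2)) (by omega) (by omega)
            (by rw [show m+2-1 = m+1 by omega]; omega)
          rw [show m+2-1 = m+1 by omega, show m+2+1 = m+3 by omega] at h9
          rw [show (n-1).choose (m+2) + (X + L - (n-1).choose (m+2)) = X + L by omega] at h9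
          exact h9
        have e2 : pre (m+2) n X = pre (m+2) (n-1) X :=
          pre_block_left (by omega) (by omega) (by omega)
        -- L₁ := (n-1).choose (m+2) - X ≥ 1 ; L₂ := X + L - (n-1).choose (m+2)
        -- h1 : terminal window of the first block is below terminal at level m+1 (GG)
        have h1 := hGG (n-1) ((n-1).choose (m+2) - X) (by omega) (by omega) (by omega)
        rw [show (n-1).choose (m+2) - ((n-1).choose (m+2) - X) = X by omega] at h1
        -- h2 : superadditivity at level m+1
        have h2 : pre (m+1) (n-1) ((n-1).choose (m+1) - L)
              + mu (m+1) (X + L - (n-1).choose (m+2))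
            ≤ pre (m+1) (n-1) ((n-1).choose (m+1) - ((n-1).choose (m+2) - X)) := by
          have := SUPw hSUP (n := n-1) (X := (n-1).choose (m+1) - L)
            (L := X + L - (n-1).choose (m+2)) (by omega)
          rw [show (n-1).choose (m+1) - L + (X + L - (n-1).choose (m+2))
            = (n-1).choose (m+1) - ((n-1).choose (m+2) - X) by omega] at this
          exact this
        have h3 : mu (m+1) (X + L - (n-1).choose (m+2))
            = pre (m+1) (n-1) (X + L - (n-1).choose (m+2)) :=
          (pre_eq_mu (by omega) (by omega)).symm
        have t1 : pre (m+1) (n-1) ((n-1).choose (m+1) - L)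
            + suf (m+1) (n-1) ((n-1).choose (m+1) - L) = (n-1).choose (m+2) := by
          have := pre_add_suf (m+1) (n-1) ((n-1).choose (m+1) - L) (by omega)
          rw [show m+1+1 = m+2 by omega] at this
          exact this
        have t2 : pre (m+1) (n-1) ((n-1).choose (m+1) - ((n-1).choose (m+2) - X))
            + suf (m+1) (n-1) ((n-1).choose (m+1) - ((n-1).choose (m+2) - X))
            = (n-1).choose (m+2) := by
          have := pre_add_suf (m+1) (n-1)
            ((n-1).choose (m+1) - ((n-1).choose (m+2) - X)) (by omega)
          rw [show m+1+1 = m+2 by omega] at this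
          exact this
        omega
    · -- case L > B
      have hBpos : 1 ≤ (n-1).choose (m+1) := Nat.choose_pos (by omega)
      -- L₀ := L - (n-1).choose (m+1) ∈ [1, A-1]
      have hsufR : suf (m+2) n (n.choose (m+2) - L)
          = suf (m+2) (n-1) (n.choose (m+2) - L) + (n-1).choose (m+2) := by
        exact suf_block_left (by omega) (by omega) (by omega)
      rcases le_or_gt (X + L) ((n-1).choose (m+2)) with h2a | hXA
      · -- 2a : window within first block (forces A > B)
        have e1 : pre (m+2) n (X+L) = pre (m+2) (n-1) (X+L) :=
          pre_block_left (by omega) (by omega) (by omega)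
        have e2 : pre (m+2) n X = pre (m+2) (n-1) X :=
          pre_block_left (by omega) (by omega) (by omega)
        have h1 := hQle (n-1) X L (by omega) h2a
        -- window of length B ending at A - L₀
        have h2 := hQle (n-1) ((n-1).choose (m+2) - L) ((n-1).choose (m+1)) (by omega)
          (by omega)
        rw [show (n-1).choose (m+2) - L + (n-1).choose (m+1)
          = n.choose (m+2) - L by omega] at h2
        have h3 := hGG (n-1) ((n-1).choose (m+1)) (by omega) (by omega) (le_refl _)
        rw [show (n-1).choose (m+1) - (n-1).choose (m+1) = 0 by omega] at h3
        have h4 : suf (m+1) (n-1) 0 = (n-1).choose (m+2) := by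
          have h9 := pre_add_suf (m+1) (n-1) 0 (by omega)
          rw [pre_zero, show m+1+1 = m+2 by omega] at h9
          omega
        rw [h4] at h3
        have t1 : pre (m+2) (n-1) (n.choose (m+2) - L)
            + suf (m+2) (n-1) (n.choose (m+2) - L) = (n-1).choose (m+3) := by
          have := pre_add_suf (m+2) (n-1) (n.choose (m+2) - L) (by omega)
          rw [show m+2+1 = m+3 by omega] at this
          exact this
        have t2 : pre (m+2) (n-1) (X + L) + suf (m+2) (n-1) (X+L) = (n-1).choose (m+3) := by
          have := pre_add_suf (m+2) (n-1) (X+L) (by omega)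
          rw [show m+2+1 = m+3 by omega] at this
          exact this
        have t3 : pre (m+2) (n-1) ((n-1).choose (m+2) - L)
            + suf (m+2) (n-1) ((n-1).choose (m+2) - L) = (n-1).choose (m+3) := by
          have := pre_add_suf (m+2) (n-1) ((n-1).choose (m+2) - L) (by omega)
          rw [show m+2+1 = m+3 by omega] at this
          exact this
        have t4 : pre (m+2) (n-1) ((n-1).choose (m+2) - (n-1).choose (m+1))
            + suf (m+2) (n-1) ((n-1).choose (m+2) - (n-1).choose (m+1))
            = (n-1).choose (m+3) := by
          have := pre_add_suf (m+2) (n-1)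
            ((n-1).choose (m+2) - (n-1).choose (m+1)) (by omega)
          rw [show m+2+1 = m+3 by omega] at this
          exact this
        omega
      · -- X + L > A, and since the window has length L > B it must straddle: X < A
        have hXlt : X < (n-1).choose (m+2) := by omega
        -- L₂ := X + L - A ∈ [1, B-1], L₀ := L - B, L₁ := A - X
        have e1 : pre (m+2) n (X+L) = (n-1).choose (m+3)
            + pre (m+1) (n-1) (X + L - (n-1).choose (m+2)) := by
          have h9 := pre_block_right (m := m+2) (n := n)
            (j := X + L - (n-1).choose (m+2)) (by omega) (by omega)
            (by rw [show m+2-1 = m+1 by omega]; omega)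
          rw [show m+2-1 = m+1 by omega, show m+2+1 = m+3 by omega] at h9
          rw [show (n-1).choose (m+2) + (X + L - (n-1).choose (m+2)) = X + L by omega] at h9
          exact h9
        have e2 : pre (m+2) n X = pre (m+2) (n-1) X :=
          pre_block_left (by omega) (by omega) (by omega)
        -- window of length B - L₂ ending at A - L₀  (note X + (B-L₂) = A - L₀)
        have h1 := hQle (n-1) X ((n-1).choose (m+1) - (X + L - (n-1).choose (m+2)))
          (by omega) (by omega)
        -- h2 : GG for ℓ = B - L₂ at n-1
        have h2 := hGG (n-1) ((n-1).choose (m+1) - (X + L - (n-1).choose (m+2)))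
          (by omega) (by omega) (by omega)
        rw [show (n-1).choose (m+1) - ((n-1).choose (m+1) - (X + L - (n-1).choose (m+2)))
          = X + L - (n-1).choose (m+2) by omega] at h2
        have t1 : pre (m+1) (n-1) (X + L - (n-1).choose (m+2))
            + suf (m+1) (n-1) (X + L - (n-1).choose (m+2)) = (n-1).choose (m+2) := by
          have := pre_add_suf (m+1) (n-1) (X + L - (n-1).choose (m+2)) (by omega)
          rw [show m+1+1 = m+2 by omega] at this
          exact this
        have t2 : pre (m+2) (n-1) (X + ((n-1).choose (m+1) - (X + L - (n-1).choose (m+2))))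
            + suf (m+2) (n-1) (X + ((n-1).choose (m+1) - (X + L - (n-1).choose (m+2))))
            = (n-1).choose (m+3) := by
          have := pre_add_suf (m+2) (n-1)
            (X + ((n-1).choose (m+1) - (X + L - (n-1).choose (m+2)))) (by omega)
          rw [show m+2+1 = m+3 by omega] at this
          exact this
        have t3 : pre (m+2) (n-1) (n.choose (m+2) - L)
            + suf (m+2) (n-1) (n.choose (m+2) - L) = (n-1).choose (m+3) := by
          have := pre_add_suf (m+2) (n-1) (n.choose (m+2) - L) (by omega)
          rw [show m+2+1 = m+3 by omega] at this
          exact this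
        have hid : X + ((n-1).choose (m+1) - (X + L - (n-1).choose (m+2)))
            = n.choose (m+2) - L := by omega
        rw [hid] at h1 t2
        omega

/-! Inductive step for SUP -/

lemma SUPstep {m : ℕ} (hQQ : QQs (m+1)) (hINIT : INITs m) (hSUP : SUPs m) : SUPs (m+1) := by
  have key : ∀ x y : ℕ, 1 ≤ x + y → mu (m+2) x + mu (m+2) y ≤ mu (m+2) (x+y) := by
    intro x y hxy
    obtain ⟨n, hn1, hn2, hn3⟩ := exists_block (m := m+2) (by omega) hxy
    have hps : (n+1).choose (m+2) = n.choose (m+2) + n.choose (m+1) := by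
      have h9 := pasc (n := n+1) (m := m+2) (by omega) (by omega)
      rw [show n+1-1 = n by omega, show m+2-1 = m+1 by omega] at h9
      omega
    have hcase : ∀ u v : ℕ, u + v = x + y → n.choose (m+2) ≤ u →
        mu (m+2) u + mu (m+2) v ≤ mu (m+2) (u+v) := by
      intro u v huv hu
      have hrep1 : mu (m+2) u = n.choose (m+3) + mu (m+1) (u - n.choose (m+2)) := by
        have h9 := mu_rep (m := m+2) (n := n) (j := u - n.choose (m+2)) (by omega) (by omega)
          (by rw [show m+2-1 = m+1 by omega]; omega)
        rw [show m+2-1 = m+1 by omega, show m+2+1 = m+3 by omega,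
          show n.choose (m+2) + (u - n.choose (m+2)) = u by omega] at h9
        exact h9
      have hrep2 : mu (m+2) (u+v) = n.choose (m+3)
          + mu (m+1) (u - n.choose (m+2) + v) := by
        have h9 := mu_rep (m := m+2) (n := n) (j := u - n.choose (m+2) + v) (by omega)
          (by omega) (by rw [show m+2-1 = m+1 by omega]; omega)
        rw [show m+2-1 = m+1 by omega, show m+2+1 = m+3 by omega,
          show n.choose (m+2) + (u - n.choose (m+2) + v) = u + v by omega] at h9
        exact h9
      have hs := hSUP (u - n.choose (m+2)) v
      have hi := hINIT v
      omega
    rcases le_or_gt (n.choose (m+2)) x with hx | hx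
    · exact hcase x y rfl hx
    rcases le_or_gt (n.choose (m+2)) y with hy | hy
    · have := hcase y x (by omega) hy
      rw [show y + x = x + y by omega] at this
      omega
    · -- both below the block
      have hq := hQQ n (x + y - n.choose (m+2)) (n.choose (m+2) - y) (by omega)
        (by rw [show m+1+1 = m+2 by omega]; omega)
      rw [show m+1+1 = m+2 by omega,
        show x + y - n.choose (m+2) + (n.choose (m+2) - y) = x by omega,
        show n.choose (m+2) - (n.choose (m+2) - y) = y by omega] at hq
      have c1 : pre (m+2) n x = mu (m+2) x := pre_eq_mu (by omega) (by omega)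
      have c2 : pre (m+2) n (x + y - n.choose (m+2)) = mu (m+2) (x + y - n.choose (m+2)) :=
        pre_eq_mu (by omega) (by omega)
      have c3 : pre (m+2) n y = mu (m+2) y := pre_eq_mu (by omega) (by omega)
      have c4 : pre (m+2) n y + suf (m+2) n y = n.choose (m+3) := by
        have := pre_add_suf (m+2) n y (by omega)
        rw [show m+2+1 = m+3 by omega] at this
        exact this
      have hrep : mu (m+2) (x+y) = n.choose (m+3)
          + mu (m+1) (x + y - n.choose (m+2)) := by
        have h9 := mu_rep (m := m+2) (n := n) (j := x + y - n.choose (m+2)) (by omega)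
          (by omega) (by rw [show m+2-1 = m+1 by omega]; omega)
        rw [show m+2-1 = m+1 by omega, show m+2+1 = m+3 by omega,
          show n.choose (m+2) + (x + y - n.choose (m+2)) = x + y by omega] at h9
        exact h9
      have hi := hINIT (x + y - n.choose (m+2))
      omega
  intro x y
  rcases Nat.lt_or_ge (x+y) 1 with h0 | h0
  · have hx : x = 0 := by omega
    have hy : y = 0 := by omega
    subst hx; subst hy
    simp [mu_zero]
  · have := key x y h0
    rw [show m+1+1 = m+2 by omega]
    exact this

/-! Inductive step for GG -/

lemma GGstep {m : ℕ} (hGGm : GGs m) (hQQ : QQs (m+1)) (hSUPm : SUPs m)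
    (hSUPm1 : SUPs (m+1)) (hINIT : INITs m)
    (hR : ∀ N : ℕ, N.choose (m+1) ≤ N.choose (m+2) →
      N.choose (m+3) ≤ N.choose (m+2) + mu (m+2) (N.choose (m+2) - N.choose (m+1))) :
    GGs (m+1) := by
  intro n
  induction n using Nat.strong_induction_on with
  | _ n IH =>
    intro ℓ h1 h2 h3
    rw [show m+1+2 = m+3 by omega] at h2 ⊢
    rw [show m+1+1 = m+2 by omega] at h3 ⊢
    have hQle : ∀ n' X' L', X' + L' ≤ n'.choose (m+2) →
        pre (m+2) n' (X'+L') ≤ pre (m+2) n' X' + suf (m+2) n' (n'.choose (m+2) - L') := by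
      intro n' X' L' h'
      exact QQle hQQ n' X' L' (by rw [show m+1+1 = m+2 by omega]; exact h')
    have hIH : ∀ j, 1 ≤ j → j ≤ (n-1).choose (m+3) → j ≤ (n-1).choose (m+2) →
        suf (m+3) (n-1) ((n-1).choose (m+3) - j) + 1
          ≤ suf (m+2) (n-1) ((n-1).choose (m+2) - j) := by
      intro j hj1 hj2 hj3
      have h9 := IH (n-1) (by
          have : 1 ≤ n.choose (m+3) := by omega
          by_contra hc
          push_neg at hc
          have : n = 0 := by omega
          subst this
          rw [Nat.choose_eq_zero_of_lt (by omega)] at *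
          omega) j hj1
        (by rw [show m+1+2 = m+3 by omega]; exact hj2)
        (by rw [show m+1+1 = m+2 by omega]; exact hj3)
      rw [show m+1+2 = m+3 by omega, show m+1+1 = m+2 by omega] at h9
      exact h9
    have hn : m + 3 ≤ n := by
      by_contra hcc
      push_neg at hcc
      have : n.choose (m+3) = 0 := Nat.choose_eq_zero_of_lt (by omega)
      omega
    have pasA : n.choose (m+3) = (n-1).choose (m+3) + (n-1).choose (m+2) := by
      have h9 := pasc (n := n) (m := m+3) (by omega) (by omega)
      rw [show m+3-1 = m+2 by omega] at h9
      omega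
    have pasB : n.choose (m+2) = (n-1).choose (m+2) + (n-1).choose (m+1) := by
      have h9 := pasc (n := n) (m := m+2) (by omega) (by omega)
      rw [show m+2-1 = m+1 by omega] at h9
      omega
    have hEpos : 1 ≤ (n-1).choose (m+1) := Nat.choose_pos (by omega)
    have hBpos : 1 ≤ (n-1).choose (m+2) := Nat.choose_pos (by omega)
    rcases le_or_gt ℓ ((n-1).choose (m+2)) with hlB | hlB
    · -- LHS reduces by suf_block_right at level m+3
      have eL : suf (m+3) n (n.choose (m+3) - ℓ)
          = suf (m+2) (n-1) ((n-1).choose (m+2) - ℓ) := by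
        have h9 := suf_block_right (m := m+3) (n := n)
          (j := (n-1).choose (m+2) - ℓ) (by omega) (by omega)
        rw [show m+3-1 = m+2 by omega,
          show (n-1).choose (m+3) + ((n-1).choose (m+2) - ℓ) = n.choose (m+3) - ℓ
            by omega] at h9
        exact h9
      rcases le_or_gt ℓ ((n-1).choose (m+1)) with hlE | hlE
      · -- g1
        have eR : suf (m+2) n (n.choose (m+2) - ℓ)
            = suf (m+1) (n-1) ((n-1).choose (m+1) - ℓ) := by
          have h9 := suf_block_right (m := m+2) (n := n)
            (j := (n-1).choose (m+1) - ℓ) (by omega) (by omega)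
          rw [show m+2-1 = m+1 by omega,
            show (n-1).choose (m+2) + ((n-1).choose (m+1) - ℓ) = n.choose (m+2) - ℓ
              by omega] at h9
          exact h9
        rw [eL, eR]
        exact hGGm (n-1) ℓ h1 hlB hlE
      · -- g2 : E < ℓ ≤ B
        have eR : suf (m+2) n (n.choose (m+2) - ℓ)
            = suf (m+2) (n-1) (n.choose (m+2) - ℓ) + (n-1).choose (m+2) := by
          exact suf_block_left (by omega) (by omega) (by omega)
        have hq := hQle (n-1) ((n-1).choose (m+2) - ℓ) ((n-1).choose (m+1)) (by omega)
        rw [show (n-1).choose (m+2) - ℓ + (n-1).choose (m+1) = n.choose (m+2) - ℓ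
          by omega] at hq
        have hg := hGGm (n-1) ((n-1).choose (m+1)) (by omega) (by omega) (le_refl _)
        rw [show (n-1).choose (m+1) - (n-1).choose (m+1) = 0 by omega] at hg
        have h4 : suf (m+1) (n-1) 0 = (n-1).choose (m+2) := by
          have h9 := pre_add_suf (m+1) (n-1) 0 (by omega)
          rw [pre_zero, show m+1+1 = m+2 by omega] at h9
          omega
        rw [h4] at hg
        have t1 : pre (m+2) (n-1) ((n-1).choose (m+2) - ℓ)
            + suf (m+2) (n-1) ((n-1).choose (m+2) - ℓ) = (n-1).choose (m+3) := by
          have h9 := pre_add_suf (m+2) (n-1) ((n-1).choose (m+2) - ℓ) (by omega)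
          rw [show m+2+1 = m+3 by omega] at h9
          exact h9
        have t2 : pre (m+2) (n-1) (n.choose (m+2) - ℓ)
            + suf (m+2) (n-1) (n.choose (m+2) - ℓ) = (n-1).choose (m+3) := by
          have h9 := pre_add_suf (m+2) (n-1) (n.choose (m+2) - ℓ) (by omega)
          rw [show m+2+1 = m+3 by omega] at h9
          exact h9
        have t3 : pre (m+2) (n-1) ((n-1).choose (m+2) - (n-1).choose (m+1))
            + suf (m+2) (n-1) ((n-1).choose (m+2) - (n-1).choose (m+1))
            = (n-1).choose (m+3) := by
          have h9 := pre_add_suf (m+2) (n-1)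
            ((n-1).choose (m+2) - (n-1).choose (m+1)) (by omega)
          rw [show m+2+1 = m+3 by omega] at h9
          exact h9
        rw [eL, eR]
        omega
    · -- ℓ > B : LHS via suf_block_left at level m+3
      rw [show n.choose (m+3) - ℓ = (n-1).choose (m+3) - (ℓ - (n-1).choose (m+2))
        by omega]
      have eL : suf (m+3) n ((n-1).choose (m+3) - (ℓ - (n-1).choose (m+2)))
          = suf (m+3) (n-1) ((n-1).choose (m+3) - (ℓ - (n-1).choose (m+2)))
            + (n-1).choose (m+3) :=
        suf_block_left (by omega) (by omega) (by omega)
      have hj1 : 1 ≤ ℓ - (n-1).choose (m+2) := by omega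
      have hjA : ℓ - (n-1).choose (m+2) ≤ (n-1).choose (m+3) := by omega
      rcases le_or_gt ℓ ((n-1).choose (m+1)) with hlE | hlE
      · -- g3 : B < ℓ ≤ E  (implies A ≤ B)
        have hEB : (n-1).choose (m+2) < (n-1).choose (m+1) := by omega
        have hreg : n - 1 ≤ 2*(m+1)+1 := by
          by_contra hcon
          push_neg at hcon
          have h9 := choose_step_up (N := n-1) (r := m+1) (by omega)
          rw [show m+1+1 = m+2 by omega] at h9
          omega
        have hAB : (n-1).choose (m+3) ≤ (n-1).choose (m+2) := by
          have h9 := choose_step_down (N := n-1) (r := m+2) (by omega)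
          rw [show m+2+1 = m+3 by omega] at h9
          exact h9
        have hjB : ℓ - (n-1).choose (m+2) ≤ (n-1).choose (m+2) := by omega
        have eR : suf (m+2) n (n.choose (m+2) - ℓ)
            = suf (m+1) (n-1) ((n-1).choose (m+1) - ℓ) := by
          have h9 := suf_block_right (m := m+2) (n := n)
            (j := (n-1).choose (m+1) - ℓ) (by omega) (by omega)
          rw [show m+2-1 = m+1 by omega,
            show (n-1).choose (m+2) + ((n-1).choose (m+1) - ℓ) = n.choose (m+2) - ℓ
              by omega] at h9
          exact h9
        have h1' := hIH (ℓ - (n-1).choose (m+2)) hj1 hjA hjB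
        have h2' := hGGm (n-1) (ℓ - (n-1).choose (m+2)) hj1 hjB (by omega)
        have h3' := SUPw hSUPm (n := n-1) (X := (n-1).choose (m+1) - ℓ)
          (L := (n-1).choose (m+2)) (by rw [show m+1 = m+1 by rfl]; omega)
        rw [show (n-1).choose (m+1) - ℓ + (n-1).choose (m+2)
          = (n-1).choose (m+1) - (ℓ - (n-1).choose (m+2)) by omega] at h3'
        have h4' := hINIT ((n-1).choose (m+2))
        have h5' : mu (m+2) ((n-1).choose (m+2)) = (n-1).choose (m+3) := by
          have h9 := mu_total (m+2) (n-1) (by omega)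
          rw [show m+2+1 = m+3 by omega] at h9
          exact h9
        have t1 : pre (m+1) (n-1) ((n-1).choose (m+1) - ℓ)
            + suf (m+1) (n-1) ((n-1).choose (m+1) - ℓ) = (n-1).choose (m+2) := by
          have h9 := pre_add_suf (m+1) (n-1) ((n-1).choose (m+1) - ℓ) (by omega)
          rw [show m+1+1 = m+2 by omega] at h9
          exact h9
        have t2 : pre (m+1) (n-1) ((n-1).choose (m+1) - (ℓ - (n-1).choose (m+2)))
            + suf (m+1) (n-1) ((n-1).choose (m+1) - (ℓ - (n-1).choose (m+2)))
            = (n-1).choose (m+2) := by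
          have h9 := pre_add_suf (m+1) (n-1)
            ((n-1).choose (m+1) - (ℓ - (n-1).choose (m+2))) (by omega)
          rw [show m+1+1 = m+2 by omega] at h9
          exact h9
        rw [eL, eR]
        omega
      · -- g4 : ℓ > B and ℓ > E
        have hiB : ℓ - (n-1).choose (m+1) ≤ (n-1).choose (m+2) := by omega
        have hi1 : 1 ≤ ℓ - (n-1).choose (m+1) := by omega
        rw [show n.choose (m+2) - ℓ
          = (n-1).choose (m+2) - (ℓ - (n-1).choose (m+1)) by omega]
        have eR : suf (m+2) n ((n-1).choose (m+2) - (ℓ - (n-1).choose (m+1)))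
            = suf (m+2) (n-1) ((n-1).choose (m+2) - (ℓ - (n-1).choose (m+1)))
              + (n-1).choose (m+2) :=
          suf_block_left (by omega) (by omega) (by omega)
        rcases le_or_gt ((n-1).choose (m+1)) ((n-1).choose (m+2)) with hEB | hEB
        · -- g4a : E ≤ B
          have hjE : ℓ - (n-1).choose (m+2) ≤ (n-1).choose (m+1) := by omega
          have hjB : ℓ - (n-1).choose (m+2) ≤ (n-1).choose (m+2) := by omega
          have h1' := hIH (ℓ - (n-1).choose (m+2)) hj1 hjA hjB
          have h2' := SUPw hSUPm1 (n := n-1)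
            (X := (n-1).choose (m+2) - (ℓ - (n-1).choose (m+1)))
            (L := (n-1).choose (m+2) - (n-1).choose (m+1))
            (by rw [show m+1+1 = m+2 by omega]; omega)
          rw [show m+1+1 = m+2 by omega] at h2'
          rw [show (n-1).choose (m+2) - (ℓ - (n-1).choose (m+1))
              + ((n-1).choose (m+2) - (n-1).choose (m+1))
            = (n-1).choose (m+2) - (ℓ - (n-1).choose (m+2)) by omega] at h2'
          have h3' := hR (n-1) hEB
          have t1 : pre (m+2) (n-1) ((n-1).choose (m+2) - (ℓ - (n-1).choose (m+1)))
              + suf (m+2) (n-1) ((n-1).choose (m+2) - (ℓ - (n-1).choose (m+1)))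
              = (n-1).choose (m+3) := by
            have h9 := pre_add_suf (m+2) (n-1)
              ((n-1).choose (m+2) - (ℓ - (n-1).choose (m+1))) (by omega)
            rw [show m+2+1 = m+3 by omega] at h9
            exact h9
          have t2 : pre (m+2) (n-1) ((n-1).choose (m+2) - (ℓ - (n-1).choose (m+2)))
              + suf (m+2) (n-1) ((n-1).choose (m+2) - (ℓ - (n-1).choose (m+2)))
              = (n-1).choose (m+3) := by
            have h9 := pre_add_suf (m+2) (n-1)
              ((n-1).choose (m+2) - (ℓ - (n-1).choose (m+2))) (by omega)
            rw [show m+2+1 = m+3 by omega] at h9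
            exact h9
          rw [eL, eR]
          omega
        · -- g4b : E > B (implies A ≤ B)
          have hreg : n - 1 ≤ 2*(m+1)+1 := by
            by_contra hcon
            push_neg at hcon
            have h9 := choose_step_up (N := n-1) (r := m+1) (by omega)
            rw [show m+1+1 = m+2 by omega] at h9
            omega
          have hAB : (n-1).choose (m+3) ≤ (n-1).choose (m+2) := by
            have h9 := choose_step_down (N := n-1) (r := m+2) (by omega)
            rw [show m+2+1 = m+3 by omega] at h9
            exact h9
          have hjB : ℓ - (n-1).choose (m+2) ≤ (n-1).choose (m+2) := by omega
          have h1' := hIH (ℓ - (n-1).choose (m+2)) hj1 hjA hjB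
          -- j - i = E - B ; window from B-j to B-i
          have h2' := hQle (n-1)
            ((n-1).choose (m+2) - (ℓ - (n-1).choose (m+2)))
            ((n-1).choose (m+1) - (n-1).choose (m+2)) (by omega)
          rw [show (n-1).choose (m+2) - (ℓ - (n-1).choose (m+2))
              + ((n-1).choose (m+1) - (n-1).choose (m+2))
            = (n-1).choose (m+2) - (ℓ - (n-1).choose (m+1)) by omega] at h2'
          have h3' := hGGm (n-1) ((n-1).choose (m+1) - (n-1).choose (m+2))
            (by omega) (by omega) (by omega)
          rw [show (n-1).choose (m+1) - ((n-1).choose (m+1) - (n-1).choose (m+2))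
            = (n-1).choose (m+2) by omega] at h3'
          have h4' : pre (m+1) (n-1) ((n-1).choose (m+2))
              + suf (m+1) (n-1) ((n-1).choose (m+2)) = (n-1).choose (m+2) + 0 + 0
              ∨ True := Or.inr trivial
          have t0 : pre (m+1) (n-1) ((n-1).choose (m+2))
              + suf (m+1) (n-1) ((n-1).choose (m+2)) = (n-1).choose (m+2) := by
            have h9 := pre_add_suf (m+1) (n-1) ((n-1).choose (m+2)) (by omega)
            rw [show m+1+1 = m+2 by omega] at h9
            exact h9
          have t0' : pre (m+1) (n-1) ((n-1).choose (m+2)) = mu (m+1) ((n-1).choose (m+2)) :=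
            pre_eq_mu (by omega) (by omega)
          have h5' := hINIT ((n-1).choose (m+2))
          have h6' : mu (m+2) ((n-1).choose (m+2)) = (n-1).choose (m+3) := by
            have h9 := mu_total (m+2) (n-1) (by omega)
            rw [show m+2+1 = m+3 by omega] at h9
            exact h9
          have t1 : pre (m+2) (n-1) ((n-1).choose (m+2) - (ℓ - (n-1).choose (m+1)))
              + suf (m+2) (n-1) ((n-1).choose (m+2) - (ℓ - (n-1).choose (m+1)))
              = (n-1).choose (m+3) := by
            have h9 := pre_add_suf (m+2) (n-1)
              ((n-1).choose (m+2) - (ℓ - (n-1).choose (m+1))) (by omega)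
            rw [show m+2+1 = m+3 by omega] at h9
            exact h9
          have t2 : pre (m+2) (n-1) ((n-1).choose (m+2) - (ℓ - (n-1).choose (m+2)))
              + suf (m+2) (n-1) ((n-1).choose (m+2) - (ℓ - (n-1).choose (m+2)))
              = (n-1).choose (m+3) := by
            have h9 := pre_add_suf (m+2) (n-1)
              ((n-1).choose (m+2) - (ℓ - (n-1).choose (m+2))) (by omega)
            rw [show m+2+1 = m+3 by omega] at h9
            exact h9
          have t3 : pre (m+2) (n-1)
                ((n-1).choose (m+2) - ((n-1).choose (m+1) - (n-1).choose (m+2)))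
              + suf (m+2) (n-1)
                ((n-1).choose (m+2) - ((n-1).choose (m+1) - (n-1).choose (m+2)))
              = (n-1).choose (m+3) := by
            have h9 := pre_add_suf (m+2) (n-1)
              ((n-1).choose (m+2) - ((n-1).choose (m+1) - (n-1).choose (m+2))) (by omega)
            rw [show m+2+1 = m+3 by omega] at h9
            exact h9
          rw [eL, eR]
          omega

/-! The master theorem packaging all four statements. -/

theorem PKG : ∀ m : ℕ, QQs m ∧ SUPs m ∧ GGs m ∧ INITs m := by
  intro m
  induction m using Nat.strong_induction_on with
  | _ m IH =>
    match m with
    | 0 => exact ⟨QQ0, SUP0, GG0, INIT0⟩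
    | (m+1) =>
      obtain ⟨hQQ, hSUP, hGG, hINIT⟩ := IH m (by omega)
      have hQQ1 : QQs (m+1) := QQstep hQQ hGG hSUP
      have hSUP1 : SUPs (m+1) := SUPstep hQQ1 hINIT hSUP
      have hR : ∀ N : ℕ, N.choose (m+1) ≤ N.choose (m+2) →
          N.choose (m+3) ≤ N.choose (m+2) + mu (m+2) (N.choose (m+2) - N.choose (m+1)) := by
        match m with
        | 0 =>
          intro N _
          simpa using lemR1 N
        | (p+1) =>
          obtain ⟨_, _, hGGp1, _⟩ := IH (p+1) (by omega)
          obtain ⟨_, _, hGGp, _⟩ := IH p (by omega)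
          intro N hEB
          exact lemR hGGp1 hGGp N hEB
      have hGG1 : GGs (m+1) := GGstep hGG hQQ1 hSUP hSUP1 hINIT hR
      have hINIT1 : INITs (m+1) := INITgen hSUP1
      exact ⟨hQQ1, hSUP1, hGG1, hINIT1⟩

/-! Admissible sequences: canonical (Macaulay) representations. -/

lemma adm_tail {k s : ℕ} {x : ℕ → ℕ} (h : Admissible k s x) (hs : 1 ≤ s) :
    Admissible (k-1) (s-1) (fun i => x (i+1)) := by
  obtain ⟨h1, h2, h3⟩ := h
  refine ⟨by omega, fun i hi => h2 (i+1) (by omega), ?_⟩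
  simp only []
  rw [show s - 1 + 1 = s by omega]
  omega

lemma adm_ge {k s : ℕ} {x : ℕ → ℕ} (h : Admissible k s x) : ∀ i ≤ s, k - i ≤ x i := by
  obtain ⟨h1, h2, h3⟩ := h
  have key : ∀ g i, i + g ≤ s → x (i+g) + g ≤ x i := by
    intro g
    induction g with
    | zero => intro i _; simp
    | succ g ihg =>
      intro i hi
      have hstep := h2 i (by omega)
      have := ihg (i+1) (by omega)
      rw [show i + 1 + g = i + (g+1) by omega] at this
      omega
  intro i hi
  have := key (s - i) i (by omega)
  rw [show i + (s - i) = s by omega] at this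
  omega

lemma casc : ∀ (s k : ℕ) (x : ℕ → ℕ), Admissible k s x →
    (∑ i ∈ Finset.range (s+1), (x i).choose (k - i)) < (x 0 + 1).choose k := by
  intro s
  induction s with
  | zero =>
    intro k x h
    have hk : 1 ≤ k := by obtain ⟨h1, _, _⟩ := h; omega
    have hx0 : k ≤ x 0 := adm_ge h 0 (by omega)
    simp only [Nat.zero_add, Finset.range_one, Finset.sum_singleton, Nat.sub_zero]
    have hp := pasc (n := x 0 + 1) (m := k) (by omega) hk
    rw [show x 0 + 1 - 1 = x 0 by omega] at hp
    have : 0 < (x 0).choose (k-1) := Nat.choose_pos (by omega)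
    omega
  | succ s ih =>
    intro k x h
    have hk2 : 2 ≤ k := by obtain ⟨h1, _, _⟩ := h; omega
    have ht : Admissible (k-1) s (fun i => x (i+1)) := adm_tail h (by omega)
    have hih := ih (k-1) (fun i => x (i+1)) ht
    have hx1 : x 1 < x 0 := h.2.1 0 (by omega)
    have esum : ∑ i ∈ Finset.range (s+1+1), (x i).choose (k - i)
        = (x 0).choose k + ∑ i ∈ Finset.range (s+1), (x (i+1)).choose ((k-1) - i) := by
      rw [Finset.sum_range_succ']
      rw [Finset.sum_congr rfl (fun i _ => by
        rw [show k - (i+1) = (k-1) - i by omega] :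
        ∀ i ∈ Finset.range (s+1),
          (x (i+1)).choose (k - (i+1)) = (x (i+1)).choose ((k-1) - i))]
      simp only [Nat.sub_zero]
      omega
    rw [esum]
    have hmono : (x 1 + 1).choose (k-1) ≤ (x 0).choose (k-1) :=
      Nat.choose_le_choose _ (by omega)
    have hp := pasc (n := x 0 + 1) (m := k) (by omega) (by omega)
    rw [show x 0 + 1 - 1 = x 0 by omega] at hp
    simp only [Nat.zero_add] at hih
    omega

lemma conn : ∀ (s k : ℕ) (x : ℕ → ℕ) (ν : ℕ), 1 ≤ k → Admissible k s x → x 0 < ν →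
    pre k ν (∑ i ∈ Finset.range (s+1), (x i).choose (k - i))
      = ∑ i ∈ Finset.range (s+1), (x i).choose (k + 1 - i) := by
  intro s
  induction s with
  | zero =>
    intro k x ν hk h hx
    have hx0 : k ≤ x 0 := adm_ge h 0 (by omega)
    simp only [Nat.zero_add, Finset.range_one, Finset.sum_singleton, Nat.sub_zero]
    have e := pre_consist (m := k) (n := x 0) (n' := ν) (X := (x 0).choose k)
      hk (le_refl _) (by omega)
    rw [← e, pre_total _ _ hk]
  | succ s ih =>
    intro k x ν hk h hx
    have hk2 : 2 ≤ k := by obtain ⟨h1, _, _⟩ := h; omega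
    have ht : Admissible (k-1) s (fun i => x (i+1)) := adm_tail h (by omega)
    have hx1 : x 1 < x 0 := h.2.1 0 (by omega)
    have hx0 : k ≤ x 0 := adm_ge h 0 (by omega)
    have esum1 : ∑ i ∈ Finset.range (s+1+1), (x i).choose (k - i)
        = (x 0).choose k + ∑ i ∈ Finset.range (s+1), (x (i+1)).choose ((k-1) - i) := by
      rw [Finset.sum_range_succ']
      rw [Finset.sum_congr rfl (fun i _ => by
        rw [show k - (i+1) = (k-1) - i by omega] :
        ∀ i ∈ Finset.range (s+1),
          (x (i+1)).choose (k - (i+1)) = (x (i+1)).choose ((k-1) - i))]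
      simp only [Nat.sub_zero]
      omega
    have esum2 : ∑ i ∈ Finset.range (s+1+1), (x i).choose (k + 1 - i)
        = (x 0).choose (k+1) + ∑ i ∈ Finset.range (s+1), (x (i+1)).choose ((k-1) + 1 - i) := by
      rw [Finset.sum_range_succ']
      rw [Finset.sum_congr rfl (fun i _ => by
        rw [show k + 1 - (i+1) = (k-1) + 1 - i by omega] :
        ∀ i ∈ Finset.range (s+1),
          (x (i+1)).choose (k + 1 - (i+1)) = (x (i+1)).choose ((k-1) + 1 - i))]
      simp only [Nat.sub_zero]
      omega
    rw [esum1, esum2]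
    have hcasc := casc s (k-1) (fun i => x (i+1)) ht
    simp only [Nat.zero_add] at hcasc
    have hb : (∑ i ∈ Finset.range (s+1), (x (i+1)).choose ((k-1) - i))
        < (x 0).choose (k-1) := by
      calc (∑ i ∈ Finset.range (s+1), (x (i+1)).choose ((k-1) - i))
          < (x 1 + 1).choose (k-1) := hcasc
        _ ≤ (x 0).choose (k-1) := Nat.choose_le_choose _ (by omega)
    have hple : (x 0).choose k + (∑ i ∈ Finset.range (s+1), (x (i+1)).choose ((k-1) - i))
        ≤ (x 0 + 1).choose k := by
      have hp := pasc (n := x 0 + 1) (m := k) (by omega) (by omega)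
      rw [show x 0 + 1 - 1 = x 0 by omega] at hp
      omega
    have e0 : pre k ν ((x 0).choose k
          + (∑ i ∈ Finset.range (s+1), (x (i+1)).choose ((k-1) - i)))
        = pre k (x 0 + 1) ((x 0).choose k
          + (∑ i ∈ Finset.range (s+1), (x (i+1)).choose ((k-1) - i))) :=
      (pre_consist (m := k) (n := x 0 + 1) (n' := ν) hk (by omega) (by omega)).symm
    have e1 : pre k (x 0 + 1) ((x 0).choose k
          + (∑ i ∈ Finset.range (s+1), (x (i+1)).choose ((k-1) - i)))
        = (x 0).choose (k+1) + pre (k-1) (x 0)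
          (∑ i ∈ Finset.range (s+1), (x (i+1)).choose ((k-1) - i)) := by
      have h9 := pre_block_right (m := k) (n := x 0 + 1)
        (j := ∑ i ∈ Finset.range (s+1), (x (i+1)).choose ((k-1) - i))
        hk2 (by omega) (by rw [show x 0 + 1 - 1 = x 0 by omega]; omega)
      rw [show x 0 + 1 - 1 = x 0 by omega] at h9
      exact h9
    have e2 := ih (k-1) (fun i => x (i+1)) (x 0) (by omega) ht
      (by show x (0+1) < x 0; simpa using hx1)
    rw [e0, e1, e2]

/-! Final assembly -/

lemma zconv (x : ℕ → ℕ) (s j : ℕ) (hs : s ≤ j) :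
    cSumZ x s (j : ℤ) = ∑ i ∈ Finset.range (s+1), (x i).choose (j - i) := by
  unfold cSumZ chooseZ
  apply Finset.sum_congr rfl
  intro i hi
  simp only [Finset.mem_range] at hi
  have hij : i ≤ j := by omega
  rw [if_pos (by
    have : (i : ℤ) ≤ (j : ℤ) := by exact_mod_cast hij
    omega)]
  congr 1
  rw [show (j:ℤ) - (i:ℤ) = ((j - i : ℕ) : ℤ) by
    push_cast [Nat.cast_sub hij]; ring, Int.toNat_natCast]

lemma peel (x : ℕ → ℕ) (s j j' : ℕ) (h1 : j = j' + 1) :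
    ∑ i ∈ Finset.range (s+1), (x i).choose (j - i)
      = (x 0).choose j + ∑ i ∈ Finset.range s, (x (i+1)).choose (j' - i) := by
  rw [Finset.sum_range_succ']
  rw [Finset.sum_congr rfl (fun i _ => by
    rw [show j - (i+1) = j' - i by omega] :
    ∀ i ∈ Finset.range s, (x (i+1)).choose (j - (i+1)) = (x (i+1)).choose (j' - i))]
  simp only [Nat.sub_zero]
  omega

lemma tail_casc (x : ℕ → ℕ) (k s : ℕ) (hk : 2 ≤ k) (h : Admissible k s x) :
    (∑ i ∈ Finset.range s, (x (i+1)).choose ((k-1) - i)) < (x 0).choose (k-1) := by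
  match s with
  | 0 =>
    simp only [Finset.range_zero, Finset.sum_empty]
    exact Nat.choose_pos (by have := adm_ge h 0 (by omega); omega)
  | (s'+1) =>
    have ht : Admissible (k-1) s' (fun i => x (i+1)) := adm_tail h (by omega)
    have hcc := casc s' (k-1) (fun i => x (i+1)) ht
    simp only [Nat.zero_add] at hcc
    have hx1 : x 1 < x 0 := h.2.1 0 (by omega)
    calc (∑ i ∈ Finset.range (s'+1), (x (i+1)).choose ((k-1) - i))
        < (x 1 + 1).choose (k-1) := hcc
      _ ≤ (x 0).choose (k-1) := Nat.choose_le_choose _ (by omega)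

lemma tail_conn (x : ℕ → ℕ) (k ν s : ℕ) (hk : 2 ≤ k) (h : Admissible k s x)
    (hx : 1 ≤ s → x 1 < ν) :
    pre (k-1) ν (∑ i ∈ Finset.range s, (x (i+1)).choose ((k-1) - i))
      = ∑ i ∈ Finset.range s, (x (i+1)).choose (k - i) := by
  match s with
  | 0 => simp [pre_zero]
  | (s'+1) =>
    have ht : Admissible (k-1) s' (fun i => x (i+1)) := adm_tail h (by omega)
    have hcn := conn s' (k-1) (fun i => x (i+1)) ν (by omega) ht
      (by show x (0+1) < ν; simpa using hx (by omega))
    rw [Finset.sum_congr rfl (fun i _ => by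
      rw [show (k-1) + 1 - i = k - i by omega] :
      ∀ i ∈ Finset.range (s'+1),
        (x (i+1)).choose ((k-1) + 1 - i) = (x (i+1)).choose (k - i))] at hcn
    exact hcn


/-- Lemma (strict link): for `k > 1`, sequences `c`, `a` admissible for `k` and `b` admissible
for `k-1`, if `Σ C(c_{k-i}, k-i) = Σ C(a_{k-i}, k-i) + Σ C(b_{k-1-i}, k-1-i)` and
`c_k - 1 = a_k > b_{k-1}`, then `Σ C(c_{k-i}, k+1-i) > Σ C(a_{k-i}, k+1-i) + Σ C(b_{k-1-i}, k-i)`. -/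
theorem strict_link (k s t u : ℕ) (a b c : ℕ → ℕ) (hk : 1 < k)
    (ha : Admissible k s a) (hb : Admissible (k - 1) t b) (hc : Admissible k u c)
    (hca : c 0 = a 0 + 1) (hab : b 0 < a 0)
    (heq : cSumZ c u (k : ℤ) = cSumZ a s (k : ℤ) + cSumZ b t ((k : ℤ) - 1)) :
    cSumZ a s ((k : ℤ) + 1) + cSumZ b t (k : ℤ) < cSumZ c u ((k : ℤ) + 1) := by
  have hk2 : 2 ≤ k := hk
  have hsk : s < k := ha.1
  have huk : u < k := hc.1
  have htk : t < k - 1 := hb.1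
  have ha0 : k ≤ a 0 := by have := adm_ge ha 0 (by omega); simpa using this
  have hb0 : k - 1 ≤ b 0 := by have := adm_ge hb 0 (by omega); simpa using this
  -- ℕ versions of the six sums
  have zc0 : cSumZ c u (k : ℤ) = ∑ i ∈ Finset.range (u+1), (c i).choose (k - i) :=
    zconv c u k (by omega)
  have za0 : cSumZ a s (k : ℤ) = ∑ i ∈ Finset.range (s+1), (a i).choose (k - i) :=
    zconv a s k (by omega)
  have zb0 : cSumZ b t ((k:ℤ) - 1)
      = ∑ i ∈ Finset.range (t+1), (b i).choose ((k-1) - i) := by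
    have h9 := zconv b t (k-1) (by omega)
    rw [show ((k-1 : ℕ) : ℤ) = (k:ℤ) - 1 by
      rw [Nat.cast_sub (by omega : (1:ℕ) ≤ k)]; norm_num] at h9
    exact h9
  have zb1 : cSumZ b t (k : ℤ) = ∑ i ∈ Finset.range (t+1), (b i).choose (k - i) :=
    zconv b t k (by omega)
  have za1 : cSumZ a s ((k:ℤ) + 1)
      = ∑ i ∈ Finset.range (s+1), (a i).choose ((k+1) - i) := by
    have h9 := zconv a s (k+1) (by omega)
    rw [show ((k+1 : ℕ) : ℤ) = (k:ℤ) + 1 by push_cast; ring] at h9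
    exact h9
  have zc1 : cSumZ c u ((k:ℤ) + 1)
      = ∑ i ∈ Finset.range (u+1), (c i).choose ((k+1) - i) := by
    have h9 := zconv c u (k+1) (by omega)
    rw [show ((k+1 : ℕ) : ℤ) = (k:ℤ) + 1 by push_cast; ring] at h9
    exact h9
  -- peel the heads
  have pc0 := peel c u k (k-1) (by omega)
  have pa0 := peel a s k (k-1) (by omega)
  have pc1 := peel c u (k+1) k (by omega)
  have pa1 := peel a s (k+1) k (by omega)
  -- Pascal for the c-head
  have hpas : (a 0 + 1).choose k = (a 0).choose k + (a 0).choose (k-1) := by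
    have h9 := pasc (n := a 0 + 1) (m := k) (by omega) (by omega)
    rw [show a 0 + 1 - 1 = a 0 by omega] at h9
    exact h9
  have hpas1 : (a 0 + 1).choose (k+1) = (a 0).choose (k+1) + (a 0).choose k := by
    have h9 := pasc (n := a 0 + 1) (m := k+1) (by omega) (by omega)
    rw [show a 0 + 1 - 1 = a 0 by omega, show k + 1 - 1 = k by omega] at h9
    exact h9
  -- the balance equation at level k-1
  have E1 : (∑ i ∈ Finset.range u, (c (i+1)).choose ((k-1) - i)) + (a 0).choose (k-1)
      = (∑ i ∈ Finset.range s, (a (i+1)).choose ((k-1) - i))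
        + (∑ i ∈ Finset.range (t+1), (b i).choose ((k-1) - i)) := by
    rw [zc0, za0, zb0, pc0, pa0, hca, hpas] at heq
    omega
  -- bounds on the partial sums
  have hFb : (∑ i ∈ Finset.range (t+1), (b i).choose ((k-1) - i))
      < (a 0).choose (k-1) := by
    have h9 := casc t (k-1) b hb
    calc (∑ i ∈ Finset.range (t+1), (b i).choose ((k-1) - i))
        < (b 0 + 1).choose (k-1) := h9
      _ ≤ (a 0).choose (k-1) := Nat.choose_le_choose _ (by omega)
  have hSa : (∑ i ∈ Finset.range s, (a (i+1)).choose ((k-1) - i))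
      < (a 0).choose (k-1) := tail_casc a k s hk2 ha
  -- the key inequality from QQ at level k-1
  obtain ⟨hQQ, _, _, _⟩ := PKG (k-2)
  have key := hQQ (a 0) (∑ i ∈ Finset.range u, (c (i+1)).choose ((k-1) - i))
    ((a 0).choose (k-1) - (∑ i ∈ Finset.range (t+1), (b i).choose ((k-1) - i)))
    (by omega)
    (by rw [show k-2+1 = k-1 by omega]; omega)
  rw [show k-2+1 = k-1 by omega] at key
  rw [show (∑ i ∈ Finset.range u, (c (i+1)).choose ((k-1) - i))
      + ((a 0).choose (k-1) - (∑ i ∈ Finset.range (t+1), (b i).choose ((k-1) - i)))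
    = (∑ i ∈ Finset.range s, (a (i+1)).choose ((k-1) - i)) by omega] at key
  rw [show (a 0).choose (k-1)
      - ((a 0).choose (k-1) - (∑ i ∈ Finset.range (t+1), (b i).choose ((k-1) - i)))
    = (∑ i ∈ Finset.range (t+1), (b i).choose ((k-1) - i)) by omega] at key
  -- move all pre's to ambient a 0 + 1 and evaluate via conn
  have cpre : ∀ Y, Y ≤ (a 0).choose (k-1) → pre (k-1) (a 0) Y = pre (k-1) (a 0 + 1) Y :=
    fun Y hY => pre_consist (by omega) hY (by omega)
  have vSa : pre (k-1) (a 0 + 1) (∑ i ∈ Finset.range s, (a (i+1)).choose ((k-1) - i))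
      = ∑ i ∈ Finset.range s, (a (i+1)).choose (k - i) :=
    tail_conn a k (a 0 + 1) s hk2 ha (fun hs1 => by
      have h9 : a 1 < a 0 := by simpa using ha.2.1 0 (by omega)
      omega)
  have vSc : pre (k-1) (a 0 + 1) (∑ i ∈ Finset.range u, (c (i+1)).choose ((k-1) - i))
      = ∑ i ∈ Finset.range u, (c (i+1)).choose (k - i) :=
    tail_conn c k (a 0 + 1) u hk2 hc (fun hu1 => by
      have h9 : c 1 < c 0 := by simpa using hc.2.1 0 (by omega)
      omega)
  have vFb : pre (k-1) (a 0 + 1) (∑ i ∈ Finset.range (t+1), (b i).choose ((k-1) - i))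
      = ∑ i ∈ Finset.range (t+1), (b i).choose (k - i) := by
    have h9 := conn t (k-1) b (a 0 + 1) (by omega) hb (by omega)
    rw [Finset.sum_congr rfl (fun i _ => by
      rw [show (k-1) + 1 - i = k - i by omega] :
      ∀ i ∈ Finset.range (t+1),
        (b i).choose ((k-1) + 1 - i) = (b i).choose (k - i))] at h9
    exact h9
  have tFb : pre (k-1) (a 0) (∑ i ∈ Finset.range (t+1), (b i).choose ((k-1) - i))
      + suf (k-1) (a 0) (∑ i ∈ Finset.range (t+1), (b i).choose ((k-1) - i))
      = (a 0).choose k := by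
    have h9 := pre_add_suf (k-1) (a 0)
      (∑ i ∈ Finset.range (t+1), (b i).choose ((k-1) - i)) (by omega)
    rw [show k-1+1 = k by omega] at h9
    exact h9
  have eSa : pre (k-1) (a 0) (∑ i ∈ Finset.range s, (a (i+1)).choose ((k-1) - i))
      = pre (k-1) (a 0 + 1) (∑ i ∈ Finset.range s, (a (i+1)).choose ((k-1) - i)) :=
    cpre _ (by omega)
  have eSc : pre (k-1) (a 0) (∑ i ∈ Finset.range u, (c (i+1)).choose ((k-1) - i))
      = pre (k-1) (a 0 + 1) (∑ i ∈ Finset.range u, (c (i+1)).choose ((k-1) - i)) :=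
    cpre _ (by omega)
  have eFb : pre (k-1) (a 0) (∑ i ∈ Finset.range (t+1), (b i).choose ((k-1) - i))
      = pre (k-1) (a 0 + 1) (∑ i ∈ Finset.range (t+1), (b i).choose ((k-1) - i)) :=
    cpre _ (by omega)
  rw [eSa, eSc, vSa, vSc] at key
  rw [eFb, vFb] at tFb
  -- final comparison
  rw [za1, zb1, zc1, pa1, pc1, hca, hpas1]
  omega
end

section
/- Let m > 0 and k ≥ 2 be integers, and let m = C(n_k, k) + C(n_{k-1}, k-1) + Σ_{i=1}^{s} C(a_{k-i}, k-i) be the unique representation with n_k > n_{k-1} ≥ k-2, a_{k-1} > … > a_{k-s} ≥ k-s > 0 and C(n_{k-1}, k-2) > Σ_{i=1}^{s} C(a_{k-i}, k-i). Then there exists a finite simple graph G that contains a clique on n_k vertices, with c_k(G) = m and c_{k+1}(G) ≥ C(n_k, k+1) + C(n_{k-1}, k) + C(a_{k-1}, k), where the term C(a_{k-1}, k) is taken to be 0 if s = 0. -/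
/-!
Start from a clique `K` on `n_k` vertices, adjoin a vertex `u` adjacent to `n_{k-1}` vertices of
`K` and a vertex `w` adjacent to `a_{k-1}` vertices of `K`, and finally add `r` disjoint copies
of `K_k`, where `r = Σ_{i ≥ 2} C(a_{k-i}, k-i)`. A new vertex whose neighbourhood `S` is a clique
lies in exactly `C(|S|, j - 1)` of the `j`-cliques, and a disjoint `K_k` contributes one
`k`-clique and no `(k+1)`-clique; so `c_k = m` and `c_{k+1}` is exactly the claimed bound.
The condition `C(n_{k-1}, k-2) > Σ C(a_{k-i}, k-i)` gives `a_{k-1} ≤ n_{k-1} < n_k` by Pascal's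
rule, so the neighbourhood of `w` fits inside `K`.
-/

/-- The number of `n`-cliques (sets of `n` pairwise-adjacent vertices) of a finite simple graph. -/
noncomputable def cliqueCount {V : Type*} [Fintype V] (G : SimpleGraph V) (n : ℕ) : ℕ :=
  Set.ncard {t : Finset V | G.IsNClique n t}

/-- The representation `m = C(n_k, k) + C(n_{k-1}, k-1) + Σ_{i=1}^{s} C(a_{k-i}, k-i)` with
`n_k > n_{k-1} ≥ k-2`, `a_{k-1} > … > a_{k-s} ≥ k-s > 0` and
`C(n_{k-1}, k-2) > Σ_{i=1}^{s} C(a_{k-i}, k-i)`.  Here `a i` stands for `a_{k-1-i}`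
(so the trailing sum is `∑ i ∈ Finset.range s, C(a i, k-1-i)`). -/
def LgbdRep (m k nk nk1 s : ℕ) (a : ℕ → ℕ) : Prop :=
  nk1 < nk ∧ k - 2 ≤ nk1 ∧
  (∀ i, i + 1 < s → a (i + 1) < a i) ∧
  (0 < s → s < k ∧ k - s ≤ a (s - 1)) ∧
  (∑ i ∈ Finset.range s, (a i).choose (k - 1 - i)) < nk1.choose (k - 2) ∧
  m = nk.choose k + nk1.choose (k - 1) + ∑ i ∈ Finset.range s, (a i).choose (k - 1 - i)


namespace SimpleGraph

variable {V W : Type*} {G : SimpleGraph V} {H : SimpleGraph W} {n : ℕ}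

theorem cliqueCount_eq_ncard_cliqueSet [Fintype V] : cliqueCount G n = (G.cliqueSet n).ncard :=
  rfl

theorem Embedding.isClique_image_iff (f : G ↪g H) {s : Set V} :
    H.IsClique (f '' s) ↔ G.IsClique s := by
  simp only [IsClique, Set.Pairwise, Set.forall_mem_image, f.injective.ne_iff, f.map_adj_iff]

theorem Embedding.isNClique_map_iff (f : G ↪g H) {s : Finset V} :
    H.IsNClique n (s.map f.toEmbedding) ↔ G.IsNClique n s := by
  rw [isNClique_iff, isNClique_iff, Finset.coe_map, Finset.card_map]
  exact and_congr_left' f.isClique_image_iff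

theorem IsClique.ncard_isNClique_subset {T : Finset V} (hT : G.IsClique (T : Set V)) :
    {s | G.IsNClique n s ∧ ↑s ⊆ (T : Set V)}.ncard = T.card.choose n := by
  have hsubsets : {s | G.IsNClique n s ∧ ↑s ⊆ (T : Set V)} = ↑(T.powersetCard n) := by
    ext s
    simp only [Set.mem_ofPred_eq, Finset.mem_coe, Finset.mem_powersetCard, Finset.coe_subset]
    exact ⟨fun ⟨hs, hsT⟩ => ⟨hsT, hs.card_eq⟩, fun ⟨hsT, hs⟩ => ⟨⟨hT.subset hsT, hs⟩, hsT⟩⟩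
  rw [hsubsets, Set.ncard_coe_finset, Finset.card_powersetCard]

theorem cliqueCount_top [Fintype V] :
    cliqueCount (⊤ : SimpleGraph V) n = (Fintype.card V).choose n := by
  classical
  rw [← Finset.card_univ, ← (IsClique.top _).ncard_isNClique_subset]
  simp [cliqueCount]

theorem cliqueCount_map_equiv [Fintype V] [Fintype W] (e : V ≃ W) :
    cliqueCount (G.map e) n = cliqueCount G n := by
  rw [cliqueCount_eq_ncard_cliqueSet, cliqueCount_eq_ncard_cliqueSet, cliqueSet_map_of_equiv,
    Set.ncard_image_of_injective _ (Finset.map_injective _)]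

section AddVertex

def addVertex (G : SimpleGraph V) (S : Set V) : SimpleGraph (Option V) where
  Adj
    | some v, some w => G.Adj v w
    | none, some v | some v, none => v ∈ S
    | none, none => False
  symm := ⟨by
    rintro (_ | v) (_ | w) h
    exacts [h, h, h, h.symm]⟩
  loopless := ⟨by
    rintro (_ | v) h
    exacts [h, G.loopless.irrefl v h]⟩

variable (S : Set V)

@[simp]
theorem addVertex_adj_none_some {v : V} : (G.addVertex S).Adj none (some v) ↔ v ∈ S :=
  Iff.rfl

def Embedding.addVertex : G ↪g G.addVertex S :=
  ⟨.some, Iff.rfl⟩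

theorem isNClique_insertNone_iff {s : Finset V} :
    (G.addVertex S).IsNClique (n + 1) (Finset.insertNone s) ↔ G.IsNClique n s ∧ ↑s ⊆ S := by
  classical
  have hsome : (G.addVertex S).IsClique (some '' (s : Set V)) ↔ G.IsClique s :=
    (Embedding.addVertex S).isClique_image_iff
  simp [Finset.insertNone, isNClique_iff, isClique_insert, hsome, Set.subset_def, and_right_comm]

theorem cliqueSet_addVertex_succ :
    (G.addVertex S).cliqueSet (n + 1) =
      Finset.map .some '' G.cliqueSet (n + 1) ∪
        Finset.insertNone '' {s | G.IsNClique n s ∧ ↑s ⊆ S} := by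
  classical
  ext t
  simp only [Set.mem_union, Set.mem_image, mem_cliqueSet_iff, Set.mem_ofPred_eq]
  constructor
  · intro ht
    by_cases hnone : none ∈ t
    · have ht' : Finset.insertNone t.eraseNone = t := by
        rw [Finset.insertNone_eraseNone, Finset.insert_eq_of_mem hnone]
      exact .inr ⟨t.eraseNone, (isNClique_insertNone_iff S).1 (by rwa [ht']), ht'⟩
    · have ht' : t.eraseNone.map .some = t := by
        rw [Finset.map_some_eraseNone, Finset.erase_eq_of_notMem hnone]
      exact .inl ⟨t.eraseNone, (Embedding.addVertex S).isNClique_map_iff.1 (ht'.symm ▸ ht), ht'⟩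
  · rintro (⟨s, hs, rfl⟩ | ⟨s, hs, rfl⟩)
    · exact (Embedding.addVertex S).isNClique_map_iff.2 hs
    · exact (isNClique_insertNone_iff S).2 hs

theorem cliqueCount_addVertex_succ [Fintype V] :
    cliqueCount (G.addVertex S) (n + 1) =
      cliqueCount G (n + 1) + {s | G.IsNClique n s ∧ ↑s ⊆ S}.ncard := by
  have hdisj : Disjoint (Finset.map .some '' G.cliqueSet (n + 1))
      (Finset.insertNone '' {s | G.IsNClique n s ∧ ↑s ⊆ S}) := by
    simp only [Set.disjoint_left, Set.mem_image, not_exists, not_and]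
    rintro _ ⟨s, -, rfl⟩ s' - h
    have hnone : none ∈ s.map .some := h ▸ Finset.none_mem_insertNone
    simp at hnone
  rw [cliqueCount_eq_ncard_cliqueSet, cliqueCount_eq_ncard_cliqueSet, cliqueSet_addVertex_succ,
    Set.ncard_union_eq hdisj, Set.ncard_image_of_injective _ (Finset.map_injective _),
    Set.ncard_image_of_injective _ Finset.insertNone.injective]

end AddVertex

theorem cliqueSet_sum :
    (G ⊕g H).cliqueSet n =
      Finset.map .inl '' G.cliqueSet n ∪ Finset.map .inr '' H.cliqueSet n := by
  ext t
  simp only [Set.mem_union, Set.mem_image, mem_cliqueSet_iff]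
  constructor
  · intro ht
    by_cases hright : t.toRight = ∅
    · have ht' : t.toLeft.map .inl = t := by
        rw [← Finset.disjSum_empty, ← hright, Finset.toLeft_disjSum_toRight]
      exact .inl ⟨t.toLeft, Embedding.sumInl.isNClique_map_iff.1 (ht'.symm ▸ ht), ht'⟩
    · obtain ⟨w, hw⟩ := Finset.nonempty_iff_ne_empty.2 hright
      have hleft : t.toLeft = ∅ := Finset.eq_empty_of_forall_notMem fun v hv =>
        not_adj_sum_inl_inr v w (ht.isClique (Finset.mem_toLeft.1 hv) (Finset.mem_toRight.1 hw)
          Sum.inl_ne_inr)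
      have ht' : t.toRight.map .inr = t := by
        rw [← Finset.empty_disjSum, ← hleft, Finset.toLeft_disjSum_toRight]
      exact .inr ⟨t.toRight, Embedding.sumInr.isNClique_map_iff.1 (ht'.symm ▸ ht), ht'⟩
  · rintro (⟨s, hs, rfl⟩ | ⟨s, hs, rfl⟩)
    · exact Embedding.sumInl.isNClique_map_iff.2 hs
    · exact Embedding.sumInr.isNClique_map_iff.2 hs

theorem cliqueCount_sum [Fintype V] [Fintype W] (hn : n ≠ 0) :
    cliqueCount (G ⊕g H) n = cliqueCount G n + cliqueCount H n := by
  have hdisj : Disjoint (Finset.map .inl '' G.cliqueSet n) (Finset.map .inr '' H.cliqueSet n) := by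
    simp only [Set.disjoint_left, Set.mem_image, not_exists, not_and]
    rintro _ ⟨s, -, rfl⟩ s' hs' h
    have hempty := Finset.disjoint_map_inl_map_inr s s'
    rw [← h, Finset.disjoint_self_iff_empty, Finset.map_eq_empty] at hempty
    exact hn (by rw [← hs'.card_eq, hempty, Finset.card_empty])
  rw [cliqueCount_eq_ncard_cliqueSet, cliqueCount_eq_ncard_cliqueSet,
    cliqueCount_eq_ncard_cliqueSet, cliqueSet_sum, Set.ncard_union_eq hdisj,
    Set.ncard_image_of_injective _ (Finset.map_injective _),
    Set.ncard_image_of_injective _ (Finset.map_injective _)]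

theorem exists_cliqueCount_add_disjoint_copies [Fintype V] [Fintype W] (G : SimpleGraph V)
    (H : SimpleGraph W) (r : ℕ) :
    ∃ (N : ℕ) (G' : SimpleGraph (Fin N)), G ⊑ G' ∧
      ∀ n ≠ 0, cliqueCount G' n = cliqueCount G n + r * cliqueCount H n := by
  induction r with
  | zero =>
    exact ⟨_, G.map (Fintype.equivFin V), (Iso.map _ G).isContained,
      fun n _ => by rw [cliqueCount_map_equiv, zero_mul, add_zero]⟩
  | succ r ih =>
    obtain ⟨N, G', hGG', hcount⟩ := ih
    let e := Fintype.equivFin (Fin N ⊕ W)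
    refine ⟨_, (G' ⊕g H).map e,
      hGG'.trans (Embedding.sumInl.isContained.trans (Iso.map e _).isContained), fun n hn => ?_⟩
    rw [cliqueCount_map_equiv, cliqueCount_sum hn, hcount n hn]
    ring

theorem exists_graph_cliqueCount_succ (N M b r k : ℕ) (hM : M ≤ N) (hb : b ≤ N) :
    ∃ (nv : ℕ) (G : SimpleGraph (Fin nv)), completeGraph (Fin N) ⊑ G ∧
      ∀ j, cliqueCount G (j + 1) =
        N.choose (j + 1) + M.choose j + b.choose j + r * k.choose (j + 1) := by
  obtain ⟨S, -, hS⟩ := Finset.exists_subset_card_eq (s := (Finset.univ : Finset (Fin N)))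
    (by simpa using hM)
  obtain ⟨T, -, hT⟩ := Finset.exists_subset_card_eq (s := (Finset.univ : Finset (Fin N)))
    (by simpa using hb)
  let G₁ := (completeGraph (Fin N)).addVertex S
  let G₂ := G₁.addVertex (T.map .some : Finset (Option (Fin N)))
  obtain ⟨nv, G, hG₂G, hcount⟩ :=
    exists_cliqueCount_add_disjoint_copies G₂ (completeGraph (Fin k)) r
  refine ⟨nv, G, ((Embedding.addVertex _).isContained.trans
    (Embedding.addVertex _).isContained).trans hG₂G, fun j => ?_⟩
  have hT_clique : G₁.IsClique (T.map .some : Set (Option (Fin N))) := by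
    rw [Finset.coe_map]
    exact (Embedding.addVertex _).isClique_image_iff.2 (IsClique.top _)
  rw [hcount _ j.succ_ne_zero, cliqueCount_addVertex_succ, cliqueCount_addVertex_succ,
    hT_clique.ncard_isNClique_subset, (IsClique.top _).ncard_isNClique_subset, cliqueCount_top,
    cliqueCount_top, Fintype.card_fin, Fintype.card_fin, Finset.card_map, hS, hT]

end SimpleGraph

theorem LgbdRep.exists_split_head {m k nk nk1 s : ℕ} {a : ℕ → ℕ} (hk : 2 ≤ k)
    (h : LgbdRep m k nk nk1 s a) :
    ∃ b r, b ≤ nk1 ∧ m = nk.choose k + nk1.choose (k - 1) + b.choose (k - 1) + r ∧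
      (if 0 < s then (a 0).choose k else 0) = b.choose k := by
  obtain ⟨-, -, -, -, hsum, rfl⟩ := h
  rcases Nat.eq_zero_or_pos s with rfl | hs
  · refine ⟨0, 0, Nat.zero_le _, ?_, ?_⟩ <;>
      simp [Nat.choose_eq_zero_of_lt, show 0 < k - 1 by omega, show 0 < k by omega]
  · have hhead : ∑ i ∈ Finset.range s, (a i).choose (k - 1 - i) =
        (a 0).choose (k - 1) + ∑ i ∈ Finset.Ico 1 s, (a i).choose (k - 1 - i) := by
      rw [Finset.range_eq_Ico, Finset.sum_eq_sum_Ico_succ_bot hs, Nat.sub_zero]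
    refine ⟨a 0, _, ?_, by rw [hhead, ← add_assoc], if_pos hs⟩
    by_contra! hlt
    have hmono : (nk1 + 1).choose (k - 1) ≤ (a 0).choose (k - 1) := Nat.choose_le_choose _ hlt
    have hpascal : (nk1 + 1).choose (k - 1) = nk1.choose (k - 2) + nk1.choose (k - 1) := by
      rw [show k - 1 = k - 2 + 1 by omega, Nat.choose_succ_succ']
    omega

theorem conbd_lower_bound_general (m k nk nk1 s : ℕ) (a : ℕ → ℕ) (hk : 2 ≤ k)
    (hrep : LgbdRep m k nk nk1 s a) :
    ∃ (nv : ℕ) (G : SimpleGraph (Fin nv)),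
      (∃ t : Finset (Fin nv), G.IsNClique nk t) ∧ cliqueCount G k = m ∧
      nk.choose (k + 1) + nk1.choose k + (if 0 < s then (a 0).choose k else 0) ≤
        cliqueCount G (k + 1) := by
  obtain ⟨b, r, hb, hm, hif⟩ := hrep.exists_split_head hk
  obtain ⟨nv, G, hclique, hcount⟩ :=
    SimpleGraph.exists_graph_cliqueCount_succ nk nk1 b r k hrep.1.le (hb.trans hrep.1.le)
  refine ⟨nv, G, ?_, ?_, ?_⟩
  · simpa [SimpleGraph.CliqueFree] using
      (SimpleGraph.not_cliqueFree_iff_top_isContained nk).2 hclique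
  · obtain ⟨j, rfl⟩ : ∃ j, k = j + 1 := ⟨k - 1, by omega⟩
    rw [hm, hcount, Nat.choose_self, mul_one, Nat.add_sub_cancel]
  · rw [hif, hcount, Nat.choose_succ_self, mul_zero, add_zero]

/-- Lemma (constructive lower bound): for `m > 0` and `k ≥ 2` with representation
`m = C(n_k, k) + C(n_{k-1}, k-1) + Σ_{i=1}^{s} C(a_{k-i}, k-i)` as in `LgbdRep`, there is a
finite simple graph `G` containing a clique on `n_k` vertices with `c_k(G) = m` and
`c_{k+1}(G) ≥ C(n_k, k+1) + C(n_{k-1}, k) + C(a_{k-1}, k)` (the last term `0` if `s = 0`). -/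
theorem conbd_lower_bound (m k nk nk1 s : ℕ) (a : ℕ → ℕ) (hm : 0 < m) (hk : 2 ≤ k)
    (hrep : LgbdRep m k nk nk1 s a) :
    ∃ (nv : ℕ) (G : SimpleGraph (Fin nv)),
      (∃ t : Finset (Fin nv), G.IsNClique nk t) ∧ cliqueCount G k = m ∧
      nk.choose (k + 1) + nk1.choose k + (if 0 < s then (a 0).choose k else 0) ≤
        cliqueCount G (k + 1) :=
  conbd_lower_bound_general m k nk nk1 s a hk hrep
end

section
/- Let m > 0 and k ≥ 2 be integers, and let m = C(n_k, k) + C(n_{k-1}, k-1) + Σ_{i=1}^{s} C(a_{k-i}, k-i) be the unique representation with n_k > n_{k-1} ≥ k-2, a_{k-1} > … > a_{k-s} ≥ k-s > 0 and C(n_{k-1}, k-2) > Σ_{i=1}^{s} C(a_{k-i}, k-i). Suppose that s ≤ 1, or that s = 2 and a_{k-2} = k-2. Then there exists a finite simple graph G with c_k(G) = m and c_{k+1}(G) = lgbd_k(m) = C(n_k, k+1) + C(n_{k-1}, k) + Σ_{i=1}^{s} C(a_{k-i}, k-i+1). -/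
section CliqueConstruction

variable (nk nk1 A B : ℕ)

private def crel (x y : ℕ) : Prop :=
  (x < nk ∧ y < nk) ∨ (x < nk1 ∧ y = nk) ∨ (x < A ∧ y = nk + 1) ∨
  (x < B ∧ y = nk + 2) ∨ (x = nk + 1 ∧ y = nk + 2 ∧ 0 < B)

private def cg : SimpleGraph (Fin (nk + 3)) :=
  SimpleGraph.fromRel (fun x y => crel nk nk1 A B x y)

private def seg (t : ℕ) : Finset (Fin (nk + 3)) :=
  Finset.univ.filter (fun x => (x : ℕ) < t)

private def vu : Fin (nk + 3) := ⟨nk, by omega⟩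
private def vv : Fin (nk + 3) := ⟨nk + 1, by omega⟩
private def vw : Fin (nk + 3) := ⟨nk + 2, by omega⟩

variable {nk nk1 A B}

private lemma mem_seg {t : ℕ} {x : Fin (nk + 3)} : x ∈ seg nk t ↔ (x : ℕ) < t := by
  simp [seg]

private lemma card_seg {t : ℕ} (h : t ≤ nk) : (seg nk t).card = t := by
  have : seg nk t = (Finset.range t).attachFin
      (by intro m hm; simp only [Finset.mem_range] at hm; omega) := by
    ext x; simp [mem_seg, Finset.mem_attachFin]
  rw [this, Finset.card_attachFin, Finset.card_range]

private lemma adj_core {x y : Fin (nk + 3)} (hx : (x : ℕ) < nk) (hy : (y : ℕ) < nk)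
    (hxy : x ≠ y) : (cg nk nk1 A B).Adj x y := by
  simp only [cg, SimpleGraph.fromRel_adj, crel, ne_eq]
  exact ⟨hxy, Or.inl (Or.inl ⟨hx, hy⟩)⟩

private lemma adj_u_iff (hnk1 : nk1 ≤ nk) (hA : A ≤ nk) (hB : B ≤ nk) {x : Fin (nk + 3)} :
    (cg nk nk1 A B).Adj x (vu nk) ↔ (x : ℕ) < nk1 := by
  simp only [cg, SimpleGraph.fromRel_adj, crel, vu, ne_eq, Fin.ext_iff, and_true, true_and, and_false, false_and, or_false, false_or]
  constructor
  · rintro ⟨hne, h⟩; omega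
  · intro hx; omega

private lemma adj_v_val (hnk1 : nk1 ≤ nk) (hA : A ≤ nk) (hB : B ≤ nk) {x : Fin (nk + 3)}
    (h : (cg nk nk1 A B).Adj x (vv nk)) : (x : ℕ) < A ∨ (x : ℕ) = nk + 2 := by
  simp only [cg, SimpleGraph.fromRel_adj, crel, vv, ne_eq, Fin.ext_iff, and_true, true_and, and_false, false_and, or_false, false_or] at h
  omega

private lemma adj_v_of (hA : A ≤ nk) {x : Fin (nk + 3)} (hx : (x : ℕ) < A) :
    (cg nk nk1 A B).Adj x (vv nk) := by
  simp only [cg, SimpleGraph.fromRel_adj, crel, vv, ne_eq, Fin.ext_iff, and_true, true_and, and_false, false_and, or_false, false_or]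
  omega

private lemma adj_w_val (hnk1 : nk1 ≤ nk) (hA : A ≤ nk) (hB : B ≤ nk) {x : Fin (nk + 3)}
    (h : (cg nk nk1 A B).Adj x (vw nk)) : (x : ℕ) < B ∨ (x : ℕ) = nk + 1 := by
  simp only [cg, SimpleGraph.fromRel_adj, crel, vw, ne_eq, Fin.ext_iff, and_true, true_and, and_false, false_and, or_false, false_or] at h
  omega

private lemma adj_w_of (hB : B ≤ nk) {x : Fin (nk + 3)} (hx : (x : ℕ) < B) :
    (cg nk nk1 A B).Adj x (vw nk) := by
  simp only [cg, SimpleGraph.fromRel_adj, crel, vw, ne_eq, Fin.ext_iff, and_true, true_and, and_false, false_and, or_false, false_or]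
  omega

private lemma adj_vw_iff (hnk1 : nk1 ≤ nk) (hA : A ≤ nk) (hB : B ≤ nk) :
    (cg nk nk1 A B).Adj (vv nk) (vw nk) ↔ 0 < B := by
  simp only [cg, SimpleGraph.fromRel_adj, crel, vv, vw, ne_eq, Fin.ext_iff, and_true, true_and, and_false, false_and, or_false, false_or]
  constructor
  · rintro ⟨hne, h⟩; omega
  · intro hx; omega

end CliqueConstruction

section CliqueCount


variable {nk nk1 A B : ℕ}

private lemma seg_lt {T : ℕ} (hT : T ≤ nk) {S : Finset (Fin (nk + 3))} (hS : S ⊆ seg nk T)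
    {x : Fin (nk + 3)} (hx : x ∈ S) : (x : ℕ) < nk :=
  lt_of_lt_of_le (mem_seg.mp (hS hx)) hT

private lemma seg_notmem {T : ℕ} (hT : T ≤ nk) {S : Finset (Fin (nk + 3))} (hS : S ⊆ seg nk T)
    {z : Fin (nk + 3)} (hz : nk ≤ (z : ℕ)) : z ∉ S := fun hmem => by
  have := seg_lt hT hS hmem; omega

private lemma clique_of_seg {T : ℕ} (hT : T ≤ nk) {S : Finset (Fin (nk + 3))}
    (hS : S ⊆ seg nk T) : (cg nk nk1 A B).IsClique ↑S := by
  intro x hx y hy hxy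
  exact adj_core (seg_lt hT hS hx) (seg_lt hT hS hy) hxy

private lemma count_cg (hnk1 : nk1 ≤ nk) (hA : A ≤ nk) (hBA : B ≤ A) {j : ℕ} (hj : 2 ≤ j) :
    cliqueCount (cg nk nk1 A B) j =
      nk.choose j + nk1.choose (j - 1) + A.choose (j - 1) + B.choose (j - 1) +
        (if 0 < B then B.choose (j - 2) else 0) := by
  classical
  have hB : B ≤ nk := le_trans hBA hA
  set G := cg nk nk1 A B with hGdef
  have hvu : ((vu nk : Fin (nk + 3)) : ℕ) = nk := rfl
  have hvv : ((vv nk : Fin (nk + 3)) : ℕ) = nk + 1 := rfl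
  have hvw : ((vw nk : Fin (nk + 3)) : ℕ) = nk + 2 := rfl
  have huv : vu nk ≠ vv nk := Fin.ne_of_val_ne (by omega)
  have huw : vu nk ≠ vw nk := Fin.ne_of_val_ne (by omega)
  have hvwne : vv nk ≠ vw nk := Fin.ne_of_val_ne (by omega)
  set F0 : Finset (Finset (Fin (nk + 3))) := (seg nk nk).powersetCard j with hF0def
  set F1 : Finset (Finset (Fin (nk + 3))) :=
    ((seg nk nk1).powersetCard (j - 1)).image (insert (vu nk)) with hF1def
  set F2 : Finset (Finset (Fin (nk + 3))) :=
    ((seg nk A).powersetCard (j - 1)).image (insert (vv nk)) with hF2def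
  set F3 : Finset (Finset (Fin (nk + 3))) :=
    ((seg nk B).powersetCard (j - 1)).image (insert (vw nk)) with hF3def
  set F4 : Finset (Finset (Fin (nk + 3))) :=
    (if 0 < B then ((seg nk B).powersetCard (j - 2)).image
      (fun S => insert (vv nk) (insert (vw nk) S)) else ∅) with hF4def
  -- membership characterizations
  have hmem0 : ∀ t ∈ F0, ∀ x ∈ t, (x : ℕ) < nk := by
    intro t ht x hx
    rw [hF0def, Finset.mem_powersetCard] at ht
    exact seg_lt le_rfl ht.1 hx
  have hmem1 : ∀ t ∈ F1, vu nk ∈ t ∧ vv nk ∉ t ∧ vw nk ∉ t := by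
    intro t ht
    rw [hF1def, Finset.mem_image] at ht
    obtain ⟨S, hS, rfl⟩ := ht
    rw [Finset.mem_powersetCard] at hS
    refine ⟨Finset.mem_insert_self _ _, ?_, ?_⟩ <;>
      · intro hmem
        rcases Finset.mem_insert.mp hmem with h | h
        · rw [Fin.ext_iff] at h; omega
        · exact seg_notmem hnk1 hS.1 (by omega) h
  have hmem2 : ∀ t ∈ F2, vv nk ∈ t ∧ vu nk ∉ t ∧ vw nk ∉ t := by
    intro t ht
    rw [hF2def, Finset.mem_image] at ht
    obtain ⟨S, hS, rfl⟩ := ht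
    rw [Finset.mem_powersetCard] at hS
    refine ⟨Finset.mem_insert_self _ _, ?_, ?_⟩ <;>
      · intro hmem
        rcases Finset.mem_insert.mp hmem with h | h
        · rw [Fin.ext_iff] at h; omega
        · exact seg_notmem hA hS.1 (by omega) h
  have hmem3 : ∀ t ∈ F3, vw nk ∈ t ∧ vu nk ∉ t ∧ vv nk ∉ t := by
    intro t ht
    rw [hF3def, Finset.mem_image] at ht
    obtain ⟨S, hS, rfl⟩ := ht
    rw [Finset.mem_powersetCard] at hS
    refine ⟨Finset.mem_insert_self _ _, ?_, ?_⟩ <;>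
      · intro hmem
        rcases Finset.mem_insert.mp hmem with h | h
        · rw [Fin.ext_iff] at h; omega
        · exact seg_notmem hB hS.1 (by omega) h
  have hmem4 : ∀ t ∈ F4, vv nk ∈ t ∧ vw nk ∈ t ∧ vu nk ∉ t := by
    intro t ht
    rw [hF4def] at ht
    by_cases hBpos : 0 < B
    · rw [if_pos hBpos, Finset.mem_image] at ht
      obtain ⟨S, hS, rfl⟩ := ht
      rw [Finset.mem_powersetCard] at hS
      refine ⟨Finset.mem_insert_self _ _,
        Finset.mem_insert_of_mem (Finset.mem_insert_self _ _), ?_⟩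
      intro hmem
      rcases Finset.mem_insert.mp hmem with h | h
      · rw [Fin.ext_iff] at h; omega
      rcases Finset.mem_insert.mp h with h | h
      · rw [Fin.ext_iff] at h; omega
      · exact seg_notmem hB hS.1 (by omega) h
    · rw [if_neg hBpos] at ht
      exact absurd ht (Finset.notMem_empty t)
  have key : {t : Finset (Fin (nk + 3)) | G.IsNClique j t} = ↑(F0 ∪ F1 ∪ F2 ∪ F3 ∪ F4) := by
    ext t
    simp only [Set.mem_setOf_eq, Finset.coe_union, Set.mem_union, Finset.mem_coe]
    constructor
    · intro ht
      rw [SimpleGraph.isNClique_iff] at ht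
      obtain ⟨hcl, hcard⟩ := ht
      by_cases hu : vu nk ∈ t
      · refine Or.inl (Or.inl (Or.inl (Or.inr ?_)))
        rw [hF1def, Finset.mem_image]
        refine ⟨t.erase (vu nk), ?_, Finset.insert_erase hu⟩
        rw [Finset.mem_powersetCard]
        refine ⟨?_, by rw [Finset.card_erase_of_mem hu, hcard]⟩
        intro x hx
        have hxu : x ≠ vu nk := Finset.ne_of_mem_erase hx
        have hadj : G.Adj x (vu nk) :=
          hcl (Finset.mem_coe.mpr (Finset.mem_of_mem_erase hx)) (Finset.mem_coe.mpr hu) hxu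
        exact mem_seg.mpr ((adj_u_iff hnk1 hA hB).mp hadj)
      by_cases hv : vv nk ∈ t
      · by_cases hw : vw nk ∈ t
        · refine Or.inr ?_
          have hadjvw : G.Adj (vv nk) (vw nk) :=
            hcl (Finset.mem_coe.mpr hv) (Finset.mem_coe.mpr hw) hvwne
          have hBpos : 0 < B := (adj_vw_iff hnk1 hA hB).mp hadjvw
          rw [hF4def, if_pos hBpos, Finset.mem_image]
          have hw' : vw nk ∈ t.erase (vv nk) := Finset.mem_erase.mpr ⟨hvwne.symm, hw⟩
          refine ⟨(t.erase (vv nk)).erase (vw nk), ?_, ?_⟩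
          · rw [Finset.mem_powersetCard]
            constructor
            · intro x hx
              have hxw : x ≠ vw nk := Finset.ne_of_mem_erase hx
              have hxv : x ≠ vv nk := Finset.ne_of_mem_erase (Finset.mem_of_mem_erase hx)
              have hxt : x ∈ t := Finset.mem_of_mem_erase (Finset.mem_of_mem_erase hx)
              have hadj : G.Adj x (vw nk) :=
                hcl (Finset.mem_coe.mpr hxt) (Finset.mem_coe.mpr hw) hxw
              rcases adj_w_val hnk1 hA hB hadj with h | h
              · exact mem_seg.mpr h
              · exact absurd (Fin.ext (h.trans hvv.symm)) hxv
            · rw [Finset.card_erase_of_mem hw', Finset.card_erase_of_mem hv, hcard]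
              omega
          · rw [Finset.insert_erase hw', Finset.insert_erase hv]
        · refine Or.inl (Or.inl (Or.inr ?_))
          rw [hF2def, Finset.mem_image]
          refine ⟨t.erase (vv nk), ?_, Finset.insert_erase hv⟩
          rw [Finset.mem_powersetCard]
          refine ⟨?_, by rw [Finset.card_erase_of_mem hv, hcard]⟩
          intro x hx
          have hxv : x ≠ vv nk := Finset.ne_of_mem_erase hx
          have hxt : x ∈ t := Finset.mem_of_mem_erase hx
          have hadj : G.Adj x (vv nk) :=
            hcl (Finset.mem_coe.mpr hxt) (Finset.mem_coe.mpr hv) hxv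
          rcases adj_v_val hnk1 hA hB hadj with h | h
          · exact mem_seg.mpr h
          · exact absurd (Fin.ext (h.trans hvw.symm) ▸ hxt) hw
      by_cases hw : vw nk ∈ t
      · refine Or.inl (Or.inr ?_)
        rw [hF3def, Finset.mem_image]
        refine ⟨t.erase (vw nk), ?_, Finset.insert_erase hw⟩
        rw [Finset.mem_powersetCard]
        refine ⟨?_, by rw [Finset.card_erase_of_mem hw, hcard]⟩
        intro x hx
        have hxw : x ≠ vw nk := Finset.ne_of_mem_erase hx
        have hxt : x ∈ t := Finset.mem_of_mem_erase hx
        have hadj : G.Adj x (vw nk) :=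
          hcl (Finset.mem_coe.mpr hxt) (Finset.mem_coe.mpr hw) hxw
        rcases adj_w_val hnk1 hA hB hadj with h | h
        · exact mem_seg.mpr h
        · exact absurd (Fin.ext (h.trans hvv.symm) ▸ hxt) hv
      · refine Or.inl (Or.inl (Or.inl (Or.inl ?_)))
        rw [hF0def, Finset.mem_powersetCard]
        refine ⟨?_, hcard⟩
        intro x hx
        rw [mem_seg]
        have h1 : x ≠ vu nk := fun h => hu (h ▸ hx)
        have h2 : x ≠ vv nk := fun h => hv (h ▸ hx)
        have h3 : x ≠ vw nk := fun h => hw (h ▸ hx)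
        have h1' : (x : ℕ) ≠ nk := fun h => h1 (Fin.ext (h.trans hvu.symm))
        have h2' : (x : ℕ) ≠ nk + 1 := fun h => h2 (Fin.ext (h.trans hvv.symm))
        have h3' : (x : ℕ) ≠ nk + 2 := fun h => h3 (Fin.ext (h.trans hvw.symm))
        have := x.isLt
        omega
    · intro ht
      rcases ht with (((h0 | h1) | h2) | h3) | h4
      · rw [hF0def, Finset.mem_powersetCard] at h0
        exact (SimpleGraph.isNClique_iff _).mpr ⟨clique_of_seg le_rfl h0.1, h0.2⟩
      · rw [hF1def, Finset.mem_image] at h1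
        obtain ⟨S, hS, rfl⟩ := h1
        rw [Finset.mem_powersetCard] at hS
        have hus : vu nk ∉ S := seg_notmem hnk1 hS.1 le_rfl
        refine (SimpleGraph.isNClique_iff _).mpr ⟨?_, ?_⟩
        · rw [Finset.coe_insert]
          refine (clique_of_seg hnk1 hS.1).insert ?_
          intro b hb hne
          exact ((adj_u_iff hnk1 hA hB).mpr (mem_seg.mp (hS.1 (Finset.mem_coe.mp hb)))).symm
        · rw [Finset.card_insert_of_notMem hus, hS.2]; omega
      · rw [hF2def, Finset.mem_image] at h2
        obtain ⟨S, hS, rfl⟩ := h2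
        rw [Finset.mem_powersetCard] at hS
        have hvs : vv nk ∉ S := seg_notmem hA hS.1 (by omega)
        refine (SimpleGraph.isNClique_iff _).mpr ⟨?_, ?_⟩
        · rw [Finset.coe_insert]
          refine (clique_of_seg hA hS.1).insert ?_
          intro b hb hne
          exact (adj_v_of hA (mem_seg.mp (hS.1 (Finset.mem_coe.mp hb)))).symm
        · rw [Finset.card_insert_of_notMem hvs, hS.2]; omega
      · rw [hF3def, Finset.mem_image] at h3
        obtain ⟨S, hS, rfl⟩ := h3
        rw [Finset.mem_powersetCard] at hS
        have hws : vw nk ∉ S := seg_notmem hB hS.1 (by omega)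
        refine (SimpleGraph.isNClique_iff _).mpr ⟨?_, ?_⟩
        · rw [Finset.coe_insert]
          refine (clique_of_seg hB hS.1).insert ?_
          intro b hb hne
          exact (adj_w_of hB (mem_seg.mp (hS.1 (Finset.mem_coe.mp hb)))).symm
        · rw [Finset.card_insert_of_notMem hws, hS.2]; omega
      · rw [hF4def] at h4
        by_cases hBpos : 0 < B
        · rw [if_pos hBpos, Finset.mem_image] at h4
          obtain ⟨S, hS, rfl⟩ := h4
          rw [Finset.mem_powersetCard] at hS
          have hws : vw nk ∉ S := seg_notmem hB hS.1 (by omega)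
          have hvs : vv nk ∉ S := seg_notmem hB hS.1 (by omega)
          have hvins : vv nk ∉ insert (vw nk) S := by
            intro h
            rcases Finset.mem_insert.mp h with h | h
            · exact hvwne h
            · exact hvs h
          refine (SimpleGraph.isNClique_iff _).mpr ⟨?_, ?_⟩
          · rw [Finset.coe_insert, Finset.coe_insert]
            have hwcl : G.IsClique (insert (vw nk) ↑S) := by
              refine (clique_of_seg hB hS.1).insert ?_
              intro b hb hne
              exact (adj_w_of hB (mem_seg.mp (hS.1 (Finset.mem_coe.mp hb)))).symm
            refine hwcl.insert ?_
            intro b hb hne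
            rcases Set.mem_insert_iff.mp hb with h | h
            · rw [h]; exact (adj_vw_iff hnk1 hA hB).mpr hBpos
            · have hbB := mem_seg.mp (hS.1 (Finset.mem_coe.mp h))
              exact (adj_v_of hA (lt_of_lt_of_le hbB hBA)).symm
          · rw [Finset.card_insert_of_notMem hvins, Finset.card_insert_of_notMem hws, hS.2]
            omega
        · rw [if_neg hBpos] at h4
          exact absurd h4 (Finset.notMem_empty _)
  have c0 : F0.card = nk.choose j := by
    rw [hF0def, Finset.card_powersetCard, card_seg le_rfl]
  have cim : ∀ (z : Fin (nk + 3)) (T : ℕ), T ≤ nk → nk ≤ (z : ℕ) →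
      (((seg nk T).powersetCard (j - 1)).image (insert z)).card = T.choose (j - 1) := by
    intro z T hT hz
    rw [Finset.card_image_of_injOn, Finset.card_powersetCard, card_seg hT]
    intro S hS S' hS' hEq
    rw [Finset.mem_coe, Finset.mem_powersetCard] at hS hS'
    have h1 : z ∉ S := seg_notmem hT hS.1 hz
    have h2 : z ∉ S' := seg_notmem hT hS'.1 hz
    rw [← Finset.erase_insert h1, hEq, Finset.erase_insert h2]
  have c1 : F1.card = nk1.choose (j - 1) := by rw [hF1def]; exact cim _ _ hnk1 le_rfl
  have c2 : F2.card = A.choose (j - 1) := by rw [hF2def]; exact cim _ _ hA (by omega)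
  have c3 : F3.card = B.choose (j - 1) := by rw [hF3def]; exact cim _ _ hB (by omega)
  have c4 : F4.card = (if 0 < B then B.choose (j - 2) else 0) := by
    rw [hF4def]
    by_cases hBpos : 0 < B
    · rw [if_pos hBpos, if_pos hBpos, Finset.card_image_of_injOn,
        Finset.card_powersetCard, card_seg hB]
      intro S hS S' hS' hEq
      rw [Finset.mem_coe, Finset.mem_powersetCard] at hS hS'
      have hws : vw nk ∉ S := seg_notmem hB hS.1 (by omega)
      have hvs : vv nk ∉ S := seg_notmem hB hS.1 (by omega)
      have hws' : vw nk ∉ S' := seg_notmem hB hS'.1 (by omega)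
      have hvs' : vv nk ∉ S' := seg_notmem hB hS'.1 (by omega)
      have hvins : vv nk ∉ insert (vw nk) S := by
        intro h
        rcases Finset.mem_insert.mp h with h | h
        · exact hvwne h
        · exact hvs h
      have hvins' : vv nk ∉ insert (vw nk) S' := by
        intro h
        rcases Finset.mem_insert.mp h with h | h
        · exact hvwne h
        · exact hvs' h
      simp only at hEq
      have h2 : insert (vw nk) S = insert (vw nk) S' := by
        rw [← Finset.erase_insert hvins, hEq, Finset.erase_insert hvins']
      rw [← Finset.erase_insert hws, h2, Finset.erase_insert hws']
    · rw [if_neg hBpos, if_neg hBpos, Finset.card_empty]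
  have d01 : Disjoint F0 F1 := by
    rw [Finset.disjoint_left]; intro t h0 h1
    have := hmem0 t h0 _ (hmem1 t h1).1
    rw [hvu] at this; omega
  have d02 : Disjoint F0 F2 := by
    rw [Finset.disjoint_left]; intro t h0 h2
    have := hmem0 t h0 _ (hmem2 t h2).1
    rw [hvv] at this; omega
  have d03 : Disjoint F0 F3 := by
    rw [Finset.disjoint_left]; intro t h0 h3
    have := hmem0 t h0 _ (hmem3 t h3).1
    rw [hvw] at this; omega
  have d04 : Disjoint F0 F4 := by
    rw [Finset.disjoint_left]; intro t h0 h4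
    have := hmem0 t h0 _ (hmem4 t h4).1
    rw [hvv] at this; omega
  have d12 : Disjoint F1 F2 := by
    rw [Finset.disjoint_left]; intro t h1 h2
    exact (hmem2 t h2).2.1 (hmem1 t h1).1
  have d13 : Disjoint F1 F3 := by
    rw [Finset.disjoint_left]; intro t h1 h3
    exact (hmem3 t h3).2.1 (hmem1 t h1).1
  have d14 : Disjoint F1 F4 := by
    rw [Finset.disjoint_left]; intro t h1 h4
    exact (hmem4 t h4).2.2 (hmem1 t h1).1
  have d23 : Disjoint F2 F3 := by
    rw [Finset.disjoint_left]; intro t h2 h3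
    exact (hmem2 t h2).2.2 (hmem3 t h3).1
  have d24 : Disjoint F2 F4 := by
    rw [Finset.disjoint_left]; intro t h2 h4
    exact (hmem2 t h2).2.2 (hmem4 t h4).2.1
  have d34 : Disjoint F3 F4 := by
    rw [Finset.disjoint_left]; intro t h3 h4
    exact (hmem3 t h3).2.2 (hmem4 t h4).1
  have dU1 : Disjoint (F0 ∪ F1) F2 := Finset.disjoint_union_left.mpr ⟨d02, d12⟩
  have dU2 : Disjoint (F0 ∪ F1 ∪ F2) F3 :=
    Finset.disjoint_union_left.mpr ⟨Finset.disjoint_union_left.mpr ⟨d03, d13⟩, d23⟩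
  have dU3 : Disjoint (F0 ∪ F1 ∪ F2 ∪ F3) F4 :=
    Finset.disjoint_union_left.mpr
      ⟨Finset.disjoint_union_left.mpr ⟨Finset.disjoint_union_left.mpr ⟨d04, d14⟩, d24⟩, d34⟩
  rw [cliqueCount, key, Set.ncard_coe_finset,
    Finset.card_union_of_disjoint dU3, Finset.card_union_of_disjoint dU2,
    Finset.card_union_of_disjoint dU1, Finset.card_union_of_disjoint d01,
    c0, c1, c2, c3, c4]

end CliqueCount

private lemma a0_le {k a0 nk1 : ℕ} (hk : 2 ≤ k)
    (hlt : a0.choose (k - 1) < nk1.choose (k - 2)) : a0 ≤ nk1 := by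
  by_contra h
  push_neg at h
  have h1 : nk1.choose (k - 2) ≤ (nk1 + 1).choose (k - 1) := by
    have hk1 : k - 1 = (k - 2) + 1 := by omega
    rw [hk1, Nat.choose_succ_succ]
    exact Nat.le_add_right _ _
  have h2 : (nk1 + 1).choose (k - 1) ≤ a0.choose (k - 1) :=
    Nat.choose_le_choose _ (by omega)
  omega


/-- Construction 1: for `m > 0`, `k ≥ 2` with representation as in `LgbdRep`, if `s ≤ 1` or
(`s = 2` and `a_{k-2} = k-2`), then there is a finite simple graph `G` with `c_k(G) = m` and
`c_{k+1}(G) = lgbd_k(m) = C(n_k, k+1) + C(n_{k-1}, k) + Σ_{i=1}^{s} C(a_{k-i}, k-i+1)`. -/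
theorem construction_one (m k nk nk1 s : ℕ) (a : ℕ → ℕ) (hm : 0 < m) (hk : 2 ≤ k)
    (hrep : LgbdRep m k nk nk1 s a)
    (hcond : s ≤ 1 ∨ (s = 2 ∧ a 1 = k - 2)) :
    ∃ (nv : ℕ) (G : SimpleGraph (Fin nv)),
      cliqueCount G k = m ∧
      cliqueCount G (k + 1) =
        nk.choose (k + 1) + nk1.choose k + ∑ i ∈ Finset.range s, (a i).choose (k - i) := by
  obtain ⟨h1, h2, h3, h4, h5, h6⟩ := hrep
  have hs : s = 0 ∨ s = 1 ∨ (s = 2 ∧ a 1 = k - 2) := by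
    rcases hcond with h | ⟨h, h'⟩
    · omega
    · right; right; exact ⟨h, h'⟩
  rcases hs with hs | hs | ⟨hs, ha1⟩
  · -- s = 0
    subst hs
    rw [Finset.sum_range_zero] at h5 h6
    refine ⟨nk + 3, cg nk nk1 0 0, ?_, ?_⟩
    · rw [count_cg (le_of_lt h1) (Nat.zero_le nk) le_rfl hk,
        Nat.choose_eq_zero_of_lt (show 0 < k - 1 by omega), if_neg (lt_irrefl 0), h6]
      omega
    · rw [count_cg (le_of_lt h1) (Nat.zero_le nk) le_rfl (show 2 ≤ k + 1 by omega),
        if_neg (lt_irrefl 0), Nat.add_sub_cancel,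
        Nat.choose_eq_zero_of_lt (show 0 < k by omega), Finset.sum_range_zero]
      omega
  · -- s = 1
    subst hs
    obtain ⟨hsk, ha0⟩ := h4 (by omega)
    rw [Finset.sum_range_one, Nat.sub_zero] at h5 h6
    have ha0nk1 : a 0 ≤ nk1 := a0_le hk h5
    have hAnk : a 0 ≤ nk := le_trans ha0nk1 (le_of_lt h1)
    refine ⟨nk + 3, cg nk nk1 (a 0) 0, ?_, ?_⟩
    · rw [count_cg (le_of_lt h1) hAnk (Nat.zero_le _) hk,
        Nat.choose_eq_zero_of_lt (show 0 < k - 1 by omega), if_neg (lt_irrefl 0), h6]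
      omega
    · rw [count_cg (le_of_lt h1) hAnk (Nat.zero_le _) (show 2 ≤ k + 1 by omega),
        if_neg (lt_irrefl 0), Nat.add_sub_cancel,
        Nat.choose_eq_zero_of_lt (show 0 < k by omega),
        Finset.sum_range_one, Nat.sub_zero]
      omega
  · -- s = 2
    subst hs
    obtain ⟨hsk, ha1'⟩ := h4 (by omega)
    have hk3 : 3 ≤ k := by omega
    have ha10 : a 1 < a 0 := h3 0 (by omega)
    rw [Finset.sum_range_succ, Finset.sum_range_one, Nat.sub_zero,
      show k - 1 - 1 = k - 2 from by omega] at h5 h6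
    have ha0nk1 : a 0 ≤ nk1 := a0_le hk (by omega)
    have hAnk : a 0 ≤ nk := le_trans ha0nk1 (le_of_lt h1)
    have hBA : k - 2 ≤ a 0 := by omega
    have hBpos : 0 < k - 2 := by omega
    rw [ha1] at h6
    rw [Nat.choose_self] at h6
    refine ⟨nk + 3, cg nk nk1 (a 0) (k - 2), ?_, ?_⟩
    · rw [count_cg (le_of_lt h1) hAnk hBA hk, if_pos hBpos, Nat.choose_self,
        Nat.choose_eq_zero_of_lt (show k - 2 < k - 1 by omega), h6]
      omega
    · rw [count_cg (le_of_lt h1) hAnk hBA (show 2 ≤ k + 1 by omega), if_pos hBpos,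
        Nat.add_sub_cancel, show k + 1 - 2 = k - 1 from by omega,
        Finset.sum_range_succ, Finset.sum_range_one, Nat.sub_zero, ha1,
        Nat.choose_eq_zero_of_lt (show k - 2 < k - 1 by omega),
        Nat.choose_eq_zero_of_lt (show k - 2 < k by omega)]
      omega
end

section
/- Let m > 0 and k ≥ 2 be integers, and let m = C(n_k, k) + C(n_{k-1}, k-1) + Σ_{i=1}^{s} C(a_{k-i}, k-i) be the unique representation with n_k > n_{k-1} ≥ k-2, a_{k-1} > … > a_{k-s} ≥ k-s > 0 and C(n_{k-1}, k-2) > Σ_{i=1}^{s} C(a_{k-i}, k-i). Suppose that s = 2, or that s = 3 and a_{k-3} = k-3; suppose moreover that n_k + a_{k-2} ≥ n_{k-1} + a_{k-1}. Then there exists a finite simple graph G with c_k(G) = m and c_{k+1}(G) = lgbd_k(m) = C(n_k, k+1) + C(n_{k-1}, k) + Σ_{i=1}^{s} C(a_{k-i}, k-i+1). -/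
/- ============ auxiliary development ============ -/

/-- The construction graph: a clique on `{0,…,N-1}` together with three extra vertices
`X = N`, `Y = N+1`, `Z = N+2`, where `X` is joined to `{0,…,B-1}` and to `Y`; `Y` is joined to
`{0,…,a1-1} ∪ {B,…,B+d-1}` and to `X`; and `Z` is joined to `{0,…,c-1}`. -/
def CG (N B a1 d c : ℕ) : SimpleGraph (Fin (N + 3)) :=
  SimpleGraph.fromRel fun u v : Fin (N + 3) =>
    ((u : ℕ) < N ∧ (v : ℕ) < N) ∨ ((u : ℕ) = N ∧ ((v : ℕ) < B ∨ (v : ℕ) = N + 1)) ∨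
      ((u : ℕ) = N + 1 ∧ ((v : ℕ) < a1 ∨ (B ≤ (v : ℕ) ∧ (v : ℕ) < B + d))) ∨
      ((u : ℕ) = N + 2 ∧ (v : ℕ) < c)

instance (N B a1 d c : ℕ) : DecidableRel (CG N B a1 d c).Adj := fun u v =>
  decidable_of_iff _ (SimpleGraph.fromRel_adj _ u v).symm

lemma CG_adj {N B a1 d c : ℕ} {u v : Fin (N + 3)} :
    (CG N B a1 d c).Adj u v ↔
      (u : ℕ) ≠ (v : ℕ) ∧
        ((((u : ℕ) < N ∧ (v : ℕ) < N) ∨ ((u : ℕ) = N ∧ ((v : ℕ) < B ∨ (v : ℕ) = N + 1)) ∨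
          ((u : ℕ) = N + 1 ∧ ((v : ℕ) < a1 ∨ (B ≤ (v : ℕ) ∧ (v : ℕ) < B + d))) ∨
          ((u : ℕ) = N + 2 ∧ (v : ℕ) < c)) ∨
         (((v : ℕ) < N ∧ (u : ℕ) < N) ∨ ((v : ℕ) = N ∧ ((u : ℕ) < B ∨ (u : ℕ) = N + 1)) ∨
          ((v : ℕ) = N + 1 ∧ ((u : ℕ) < a1 ∨ (B ≤ (u : ℕ) ∧ (u : ℕ) < B + d))) ∨
          ((v : ℕ) = N + 2 ∧ (u : ℕ) < c))) := by
  unfold CG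
  rw [SimpleGraph.fromRel_adj]
  simp only [ne_eq, Fin.ext_iff]

lemma card_filter_val_lt {M : ℕ} (t : ℕ) (h : t ≤ M) :
    (Finset.univ.filter fun v : Fin M => (v : ℕ) < t).card = t := by
  have he : (Finset.univ.filter fun v : Fin M => (v : ℕ) < t)
      = (Finset.range t).attachFin (fun m hm => lt_of_lt_of_le (Finset.mem_range.mp hm) h) := by
    ext v
    simp [Finset.mem_attachFin]
  rw [he, Finset.card_attachFin, Finset.card_range]

lemma card_filter_A {M : ℕ} (a1 B d : ℕ) (h1 : a1 ≤ B) (h2 : B + d ≤ M) :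
    (Finset.univ.filter fun v : Fin M =>
      (v : ℕ) < a1 ∨ (B ≤ (v : ℕ) ∧ (v : ℕ) < B + d)).card = a1 + d := by
  have hall : ∀ m ∈ Finset.range a1 ∪ Finset.Ico B (B + d), m < M := by
    intro m hm
    rcases Finset.mem_union.mp hm with hm | hm
    · have := Finset.mem_range.mp hm; omega
    · have := Finset.mem_Ico.mp hm; omega
  have he : (Finset.univ.filter fun v : Fin M =>
      (v : ℕ) < a1 ∨ (B ≤ (v : ℕ) ∧ (v : ℕ) < B + d))
      = (Finset.range a1 ∪ Finset.Ico B (B + d)).attachFin hall := by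
    ext v
    simp [Finset.mem_attachFin, Finset.mem_union, Finset.mem_Ico]
  rw [he, Finset.card_attachFin, Finset.card_union_of_disjoint, Finset.card_range, Nat.card_Ico]
  · omega
  · rw [Finset.disjoint_left]
    intro x hx hx'
    have := Finset.mem_range.mp hx
    have := (Finset.mem_Ico.mp hx').1
    omega

lemma card_eq_choose_image {V : Type*} [DecidableEq V] (D : Finset (Finset V)) (S : Finset V)
    (r : ℕ) (f : Finset V → Finset V)
    (hinj : ∀ s, s ⊆ S → ∀ s', s' ⊆ S → f s = f s' → s = s')
    (h : ∀ t, t ∈ D ↔ ∃ s, s ⊆ S ∧ s.card = r ∧ t = f s) :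
    D.card = S.card.choose r := by
  have hD : D = (S.powersetCard r).image f := by
    ext t
    simp only [Finset.mem_image, Finset.mem_powersetCard, h]
    constructor
    · rintro ⟨s, h1, h2, rfl⟩; exact ⟨s, ⟨h1, h2⟩, rfl⟩
    · rintro ⟨s, ⟨h1, h2⟩, rfl⟩; exact ⟨s, h1, h2, rfl⟩
  rw [hD, Finset.card_image_of_injOn, Finset.card_powersetCard]
  intro s hs s' hs' hf
  rw [Finset.mem_coe, Finset.mem_powersetCard] at hs hs'
  exact hinj s hs.1 s' hs'.1 hf

lemma insert_left_cancel {V : Type*} [DecidableEq V] {w : V} {s s' : Finset V}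
    (h : w ∉ s) (h' : w ∉ s') (he : insert w s = insert w s') : s = s' := by
  rw [← Finset.erase_insert h, he, Finset.erase_insert h']

lemma cliqueCount_eq_card {V : Type*} [Fintype V] [DecidableEq V] (G : SimpleGraph V)
    [DecidableRel G.Adj] (n : ℕ) :
    cliqueCount G n = (G.cliqueFinset n).card := by
  rw [cliqueCount, ← Set.ncard_coe_finset]
  congr 1
  ext t
  simp [SimpleGraph.mem_cliqueFinset_iff]

set_option maxHeartbeats 2000000 in
lemma countCG (N B a1 d c n : ℕ) (hBN : B < N) (ha1B : a1 ≤ B) (hd : B + d ≤ N) (hc : c ≤ N)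
    (hn : 3 ≤ n) :
    ((CG N B a1 d c).cliqueFinset n).card =
      N.choose n + B.choose (n - 1) + (a1 + d).choose (n - 1) + a1.choose (n - 2) +
        c.choose (n - 1) := by
  set X : Fin (N + 3) := ⟨N, by omega⟩ with hXdef
  set Y : Fin (N + 3) := ⟨N + 1, by omega⟩ with hYdef
  set Z : Fin (N + 3) := ⟨N + 2, by omega⟩ with hZdef
  have hXv : (X : ℕ) = N := by rw [hXdef]
  have hYv : (Y : ℕ) = N + 1 := by rw [hYdef]
  have hZv : (Z : ℕ) = N + 2 := by rw [hZdef]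
  have valne : ∀ u v : Fin (N + 3), u ≠ v → (u : ℕ) ≠ (v : ℕ) := fun u v h hh => h (Fin.ext hh)
  have eqofval : ∀ u v : Fin (N + 3), (u : ℕ) = (v : ℕ) → u = v := fun u v h => Fin.ext h
  have hmem : ∀ t : Finset (Fin (N + 3)), t ∈ (CG N B a1 d c).cliqueFinset n ↔
      (t.card = n ∧ ∀ u ∈ t, ∀ v ∈ t, u ≠ v → (CG N B a1 d c).Adj u v) := by
    intro t
    rw [SimpleGraph.mem_cliqueFinset_iff, SimpleGraph.isNClique_iff,
      SimpleGraph.isClique_iff]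
    constructor
    · rintro ⟨h1, h2⟩
      exact ⟨h2, fun u hu v hv huv => h1 (Finset.mem_coe.mpr hu) (Finset.mem_coe.mpr hv) huv⟩
    · rintro ⟨h1, h2⟩
      exact ⟨fun u hu v hv huv => h2 u (Finset.mem_coe.mp hu) v (Finset.mem_coe.mp hv) huv, h1⟩
  have adj_low : ∀ u v : Fin (N + 3), (u : ℕ) < N → (v : ℕ) < N → u ≠ v →
      (CG N B a1 d c).Adj u v := by
    intro u v h1 h2 h3
    rw [CG_adj]
    exact ⟨valne u v h3, Or.inl (Or.inl ⟨h1, h2⟩)⟩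
  have adj_X : ∀ v : Fin (N + 3), (v : ℕ) < B → (CG N B a1 d c).Adj X v := by
    intro v h
    rw [CG_adj]
    exact ⟨by omega, Or.inl (Or.inr (Or.inl ⟨hXv, Or.inl h⟩))⟩
  have adj_XY : (CG N B a1 d c).Adj X Y := by
    rw [CG_adj]
    exact ⟨by omega, Or.inl (Or.inr (Or.inl ⟨hXv, Or.inr hYv⟩))⟩
  have adj_Y : ∀ v : Fin (N + 3), (v : ℕ) < a1 ∨ (B ≤ (v : ℕ) ∧ (v : ℕ) < B + d) →
      (CG N B a1 d c).Adj Y v := by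
    intro v h
    rw [CG_adj]
    exact ⟨by omega, Or.inl (Or.inr (Or.inr (Or.inl ⟨hYv, h⟩)))⟩
  have adj_Z : ∀ v : Fin (N + 3), (v : ℕ) < c → (CG N B a1 d c).Adj Z v := by
    intro v h
    rw [CG_adj]
    exact ⟨by omega, Or.inl (Or.inr (Or.inr (Or.inr ⟨hZv, h⟩)))⟩
  set K := (CG N B a1 d c).cliqueFinset n with hK
  -- the five leaf counts
  -- Z-leaf
  have hLZ : (K.filter (fun t => Z ∈ t)).card = c.choose (n - 1) := by
    have hS := card_filter_val_lt (M := N + 3) c (by omega)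
    have := card_eq_choose_image (K.filter (fun t => Z ∈ t))
        (Finset.univ.filter fun v : Fin (N + 3) => (v : ℕ) < c) (n - 1) (insert Z)
        ?_ ?_
    · rw [hS] at this; exact this
    · intro s hs s' hs' he
      refine insert_left_cancel ?_ ?_ he
      · intro h; have := (Finset.mem_filter.mp (hs h)).2; omega
      · intro h; have := (Finset.mem_filter.mp (hs' h)).2; omega
    · intro t
      rw [Finset.mem_filter, hmem]
      constructor
      · rintro ⟨⟨hcard, hpair⟩, hZt⟩
        refine ⟨t.erase Z, ?_, ?_, (Finset.insert_erase hZt).symm⟩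
        · intro v hv
          obtain ⟨hvne, hvt⟩ := Finset.mem_erase.mp hv
          have hadj := hpair Z hZt v hvt (fun h => hvne h.symm)
          rw [CG_adj] at hadj
          simp only [Finset.mem_filter, Finset.mem_univ, true_and]
          omega
        · rw [Finset.card_erase_of_mem hZt, hcard]
      · rintro ⟨s, hsub, hscard, rfl⟩
        have hSlt : ∀ v ∈ s, (v : ℕ) < c := by
          intro v hv; have := (Finset.mem_filter.mp (hsub hv)).2; exact this
        have hZs : Z ∉ s := fun h => by have := hSlt Z h; omega
        refine ⟨⟨?_, ?_⟩, Finset.mem_insert_self _ _⟩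
        · rw [Finset.card_insert_of_notMem hZs, hscard]; omega
        · intro u hu v hv huv
          rcases Finset.mem_insert.mp hu with rfl | hu'
          · rcases Finset.mem_insert.mp hv with rfl | hv'
            · exact absurd rfl huv
            · exact adj_Z v (hSlt v hv')
          · rcases Finset.mem_insert.mp hv with rfl | hv'
            · exact (adj_Z u (hSlt u hu')).symm
            · exact adj_low u v (by have := hSlt u hu'; omega)
                (by have := hSlt v hv'; omega) huv
  -- X-only leaf
  have hLX : (((K.filter (fun t => Z ∉ t)).filter (fun t => X ∈ t)).filter
      (fun t => Y ∉ t)).card = B.choose (n - 1) := by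
    have hS := card_filter_val_lt (M := N + 3) B (by omega)
    have := card_eq_choose_image
        (((K.filter (fun t => Z ∉ t)).filter (fun t => X ∈ t)).filter (fun t => Y ∉ t))
        (Finset.univ.filter fun v : Fin (N + 3) => (v : ℕ) < B) (n - 1) (insert X)
        ?_ ?_
    · rw [hS] at this; exact this
    · intro s hs s' hs' he
      refine insert_left_cancel ?_ ?_ he
      · intro h; have := (Finset.mem_filter.mp (hs h)).2; omega
      · intro h; have := (Finset.mem_filter.mp (hs' h)).2; omega
    · intro t
      rw [Finset.mem_filter, Finset.mem_filter, Finset.mem_filter, hmem]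
      constructor
      · rintro ⟨⟨⟨⟨hcard, hpair⟩, hZt⟩, hXt⟩, hYt⟩
        refine ⟨t.erase X, ?_, ?_, (Finset.insert_erase hXt).symm⟩
        · intro v hv
          obtain ⟨hvne, hvt⟩ := Finset.mem_erase.mp hv
          have hadj := hpair X hXt v hvt (fun h => hvne h.symm)
          rw [CG_adj] at hadj
          simp only [Finset.mem_filter, Finset.mem_univ, true_and]
          have hvY : (v : ℕ) ≠ N + 1 := fun h => hYt (by
            rwa [eqofval v Y (by omega)] at hvt)
          have hvZ : (v : ℕ) ≠ N + 2 := fun h => hZt (by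
            rwa [eqofval v Z (by omega)] at hvt)
          have hvX : (v : ℕ) ≠ N := fun h => hvne (eqofval v X (by omega))
          omega
        · rw [Finset.card_erase_of_mem hXt, hcard]
      · rintro ⟨s, hsub, hscard, rfl⟩
        have hSlt : ∀ v ∈ s, (v : ℕ) < B := by
          intro v hv; have := (Finset.mem_filter.mp (hsub hv)).2; exact this
        have hXs : X ∉ s := fun h => by have := hSlt X h; omega
        refine ⟨⟨⟨⟨?_, ?_⟩, ?_⟩, Finset.mem_insert_self _ _⟩, ?_⟩
        · rw [Finset.card_insert_of_notMem hXs, hscard]; omega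
        · intro u hu v hv huv
          rcases Finset.mem_insert.mp hu with rfl | hu'
          · rcases Finset.mem_insert.mp hv with rfl | hv'
            · exact absurd rfl huv
            · exact adj_X v (hSlt v hv')
          · rcases Finset.mem_insert.mp hv with rfl | hv'
            · exact (adj_X u (hSlt u hu')).symm
            · exact adj_low u v (by have := hSlt u hu'; omega)
                (by have := hSlt v hv'; omega) huv
        · intro h
          rcases Finset.mem_insert.mp h with h | h
          · have := congrArg (Fin.val) h; omega
          · have := hSlt Z h; omega
        · intro h
          rcases Finset.mem_insert.mp h with h | h
          · have := congrArg (Fin.val) h; omega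
          · have := hSlt Y h; omega
  -- Y-only leaf
  have hLY : (((K.filter (fun t => Z ∉ t)).filter (fun t => X ∉ t)).filter
      (fun t => Y ∈ t)).card = (a1 + d).choose (n - 1) := by
    have hS := card_filter_A (M := N + 3) a1 B d ha1B (by omega)
    have := card_eq_choose_image
        (((K.filter (fun t => Z ∉ t)).filter (fun t => X ∉ t)).filter (fun t => Y ∈ t))
        (Finset.univ.filter fun v : Fin (N + 3) =>
          (v : ℕ) < a1 ∨ (B ≤ (v : ℕ) ∧ (v : ℕ) < B + d)) (n - 1) (insert Y)
        ?_ ?_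
    · rw [hS] at this; exact this
    · intro s hs s' hs' he
      refine insert_left_cancel ?_ ?_ he
      · intro h; have := (Finset.mem_filter.mp (hs h)).2; omega
      · intro h; have := (Finset.mem_filter.mp (hs' h)).2; omega
    · intro t
      rw [Finset.mem_filter, Finset.mem_filter, Finset.mem_filter, hmem]
      constructor
      · rintro ⟨⟨⟨⟨hcard, hpair⟩, hZt⟩, hXt⟩, hYt⟩
        refine ⟨t.erase Y, ?_, ?_, (Finset.insert_erase hYt).symm⟩
        · intro v hv
          obtain ⟨hvne, hvt⟩ := Finset.mem_erase.mp hv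
          have hadj := hpair Y hYt v hvt (fun h => hvne h.symm)
          rw [CG_adj] at hadj
          simp only [Finset.mem_filter, Finset.mem_univ, true_and]
          have hvX : (v : ℕ) ≠ N := fun h => hXt (by
            rwa [eqofval v X (by omega)] at hvt)
          have hvZ : (v : ℕ) ≠ N + 2 := fun h => hZt (by
            rwa [eqofval v Z (by omega)] at hvt)
          have hvY : (v : ℕ) ≠ N + 1 := fun h => hvne (eqofval v Y (by omega))
          omega
        · rw [Finset.card_erase_of_mem hYt, hcard]
      · rintro ⟨s, hsub, hscard, rfl⟩
        have hSlt : ∀ v ∈ s, (v : ℕ) < a1 ∨ (B ≤ (v : ℕ) ∧ (v : ℕ) < B + d) := by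
          intro v hv; have := (Finset.mem_filter.mp (hsub hv)).2; exact this
        have hYs : Y ∉ s := fun h => by have := hSlt Y h; omega
        refine ⟨⟨⟨⟨?_, ?_⟩, ?_⟩, ?_⟩, Finset.mem_insert_self _ _⟩
        · rw [Finset.card_insert_of_notMem hYs, hscard]; omega
        · intro u hu v hv huv
          rcases Finset.mem_insert.mp hu with rfl | hu'
          · rcases Finset.mem_insert.mp hv with rfl | hv'
            · exact absurd rfl huv
            · exact adj_Y v (hSlt v hv')
          · rcases Finset.mem_insert.mp hv with rfl | hv'
            · exact (adj_Y u (hSlt u hu')).symm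
            · exact adj_low u v (by have := hSlt u hu'; omega)
                (by have := hSlt v hv'; omega) huv
        · intro h
          rcases Finset.mem_insert.mp h with h | h
          · have := congrArg (Fin.val) h; omega
          · have := hSlt Z h; omega
        · intro h
          rcases Finset.mem_insert.mp h with h | h
          · have := congrArg (Fin.val) h; omega
          · have := hSlt X h; omega
  -- X-and-Y leaf
  have hLXY : (((K.filter (fun t => Z ∉ t)).filter (fun t => X ∈ t)).filter
      (fun t => Y ∈ t)).card = a1.choose (n - 2) := by
    have hS := card_filter_val_lt (M := N + 3) a1 (by omega)
    have := card_eq_choose_image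
        (((K.filter (fun t => Z ∉ t)).filter (fun t => X ∈ t)).filter (fun t => Y ∈ t))
        (Finset.univ.filter fun v : Fin (N + 3) => (v : ℕ) < a1) (n - 2)
        (fun s => insert X (insert Y s))
        ?_ ?_
    · rw [hS] at this; exact this
    · intro s hs s' hs' he
      have hXs : ∀ s'' : Finset (Fin (N + 3)),
          s'' ⊆ (Finset.univ.filter fun v : Fin (N + 3) => (v : ℕ) < a1) →
          X ∉ insert Y s'' := by
        intro s'' hsub h
        rcases Finset.mem_insert.mp h with h | h
        · have := congrArg (Fin.val) h; omega
        · have := (Finset.mem_filter.mp (hsub h)).2; omega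
      have hYs : ∀ s'' : Finset (Fin (N + 3)),
          s'' ⊆ (Finset.univ.filter fun v : Fin (N + 3) => (v : ℕ) < a1) →
          Y ∉ s'' := by
        intro s'' hsub h
        have := (Finset.mem_filter.mp (hsub h)).2; omega
      have h1 := insert_left_cancel (hXs s hs) (hXs s' hs') he
      exact insert_left_cancel (hYs s hs) (hYs s' hs') h1
    · intro t
      rw [Finset.mem_filter, Finset.mem_filter, Finset.mem_filter, hmem]
      constructor
      · rintro ⟨⟨⟨⟨hcard, hpair⟩, hZt⟩, hXt⟩, hYt⟩
        have hYX : Y ∈ t.erase X := Finset.mem_erase.mpr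
          ⟨fun h => by have := congrArg (Fin.val) h; omega, hYt⟩
        refine ⟨(t.erase X).erase Y, ?_, ?_, ?_⟩
        · intro v hv
          obtain ⟨hvneY, hv2⟩ := Finset.mem_erase.mp hv
          obtain ⟨hvneX, hvt⟩ := Finset.mem_erase.mp hv2
          have hadjX := hpair X hXt v hvt (fun h => hvneX h.symm)
          have hadjY := hpair Y hYt v hvt (fun h => hvneY h.symm)
          rw [CG_adj] at hadjX hadjY
          simp only [Finset.mem_filter, Finset.mem_univ, true_and]
          have hvZ : (v : ℕ) ≠ N + 2 := fun h => hZt (by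
            rwa [eqofval v Z (by omega)] at hvt)
          omega
        · rw [Finset.card_erase_of_mem hYX, Finset.card_erase_of_mem hXt, hcard]
          omega
        · show t = insert X (insert Y ((t.erase X).erase Y))
          rw [Finset.insert_erase hYX, Finset.insert_erase hXt]
      · rintro ⟨s, hsub, hscard, rfl⟩
        have hSlt : ∀ v ∈ s, (v : ℕ) < a1 := by
          intro v hv; have := (Finset.mem_filter.mp (hsub hv)).2; exact this
        have hYs : Y ∉ s := fun h => by have := hSlt Y h; omega
        have hXs : X ∉ insert Y s := by
          intro h
          rcases Finset.mem_insert.mp h with h | h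
          · have := congrArg (Fin.val) h; omega
          · have := hSlt X h; omega
        refine ⟨⟨⟨⟨?_, ?_⟩, ?_⟩, Finset.mem_insert_self _ _⟩,
          Finset.mem_insert_of_mem (Finset.mem_insert_self _ _)⟩
        · rw [Finset.card_insert_of_notMem hXs, Finset.card_insert_of_notMem hYs, hscard]
          omega
        · intro u hu v hv huv
          rcases Finset.mem_insert.mp hu with rfl | hu'
          · rcases Finset.mem_insert.mp hv with rfl | hv'
            · exact absurd rfl huv
            · rcases Finset.mem_insert.mp hv' with rfl | hv''
              · exact adj_XY
              · exact adj_X v (by have := hSlt v hv''; omega)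
          · rcases Finset.mem_insert.mp hu' with rfl | hu''
            · rcases Finset.mem_insert.mp hv with rfl | hv'
              · exact adj_XY.symm
              · rcases Finset.mem_insert.mp hv' with rfl | hv''
                · exact absurd rfl huv
                · exact adj_Y v (Or.inl (hSlt v hv''))
            · rcases Finset.mem_insert.mp hv with rfl | hv'
              · exact (adj_X u (by have := hSlt u hu''; omega)).symm
              · rcases Finset.mem_insert.mp hv' with rfl | hv''
                · exact (adj_Y u (Or.inl (hSlt u hu''))).symm
                · exact adj_low u v (by have := hSlt u hu''; omega)
                    (by have := hSlt v hv''; omega) huv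
        · intro h
          rcases Finset.mem_insert.mp h with h | h
          · have := congrArg (Fin.val) h; omega
          · rcases Finset.mem_insert.mp h with h | h
            · have := congrArg (Fin.val) h; omega
            · have := hSlt Z h; omega
  -- no-special leaf
  have hLN : (((K.filter (fun t => Z ∉ t)).filter (fun t => X ∉ t)).filter
      (fun t => Y ∉ t)).card = N.choose n := by
    have hS := card_filter_val_lt (M := N + 3) N (by omega)
    have := card_eq_choose_image
        (((K.filter (fun t => Z ∉ t)).filter (fun t => X ∉ t)).filter (fun t => Y ∉ t))
        (Finset.univ.filter fun v : Fin (N + 3) => (v : ℕ) < N) n id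
        (fun s _ s' _ h => h) ?_
    · rw [hS] at this; exact this
    · intro t
      rw [Finset.mem_filter, Finset.mem_filter, Finset.mem_filter, hmem]
      constructor
      · rintro ⟨⟨⟨⟨hcard, hpair⟩, hZt⟩, hXt⟩, hYt⟩
        refine ⟨t, ?_, hcard, rfl⟩
        intro v hv
        simp only [Finset.mem_filter, Finset.mem_univ, true_and]
        have hvX : (v : ℕ) ≠ N := fun h => hXt (by rwa [eqofval v X (by omega)] at hv)
        have hvY : (v : ℕ) ≠ N + 1 := fun h => hYt (by rwa [eqofval v Y (by omega)] at hv)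
        have hvZ : (v : ℕ) ≠ N + 2 := fun h => hZt (by rwa [eqofval v Z (by omega)] at hv)
        have := v.isLt
        omega
      · rintro ⟨s, hsub, hscard, heq⟩
        rw [show t = s from heq]
        have hSlt : ∀ v ∈ s, (v : ℕ) < N := by
          intro v hv; have := (Finset.mem_filter.mp (hsub hv)).2; exact this
        refine ⟨⟨⟨⟨hscard, ?_⟩, fun h => by have := hSlt Z h; omega⟩,
          fun h => by have := hSlt X h; omega⟩, fun h => by have := hSlt Y h; omega⟩
        intro u hu v hv huv
        exact adj_low u v (hSlt u hu) (hSlt v hv) huv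
  -- splits
  have split : ∀ (D : Finset (Finset (Fin (N + 3)))) (w : Fin (N + 3)),
      (D.filter (fun t => w ∈ t)).card + (D.filter (fun t => w ∉ t)).card = D.card := by
    intro D w
    exact Finset.card_filter_add_card_filter_not _
  have s1 := split K Z
  have s2 := split (K.filter (fun t => Z ∉ t)) X
  have s3 := split ((K.filter (fun t => Z ∉ t)).filter (fun t => X ∈ t)) Y
  have s4 := split ((K.filter (fun t => Z ∉ t)).filter (fun t => X ∉ t)) Y
  omega

/- ============ main theorem ============ -/

/-- Construction 2: for `m > 0`, `k ≥ 2` with representation as in `LgbdRep`, if `s = 2` or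
(`s = 3` and `a_{k-3} = k-3`), and moreover `n_k + a_{k-2} ≥ n_{k-1} + a_{k-1}`, then there is a
finite simple graph `G` with `c_k(G) = m` and
`c_{k+1}(G) = lgbd_k(m) = C(n_k, k+1) + C(n_{k-1}, k) + Σ_{i=1}^{s} C(a_{k-i}, k-i+1)`. -/
theorem construction_two (m k nk nk1 s : ℕ) (a : ℕ → ℕ) (hm : 0 < m) (hk : 2 ≤ k)
    (hrep : LgbdRep m k nk nk1 s a)
    (hcond : s = 2 ∨ (s = 3 ∧ a 2 = k - 3))
    (hsum : nk1 + a 0 ≤ nk + a 1) :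
    ∃ (nv : ℕ) (G : SimpleGraph (Fin nv)),
      cliqueCount G k = m ∧
      cliqueCount G (k + 1) =
        nk.choose (k + 1) + nk1.choose k + ∑ i ∈ Finset.range s, (a i).choose (k - i) := by
  obtain ⟨hlt, hge, hmono, hs, hsumlt, hm_eq⟩ := hrep
  have hspos : 0 < s := by rcases hcond with h | ⟨h, _⟩ <;> omega
  obtain ⟨hsk, hks⟩ := hs hspos
  have hk3 : 3 ≤ k := by rcases hcond with h | ⟨h, _⟩ <;> omega
  have ha10 : a 1 < a 0 := hmono 0 (by rcases hcond with h | ⟨h, _⟩ <;> omega)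
  have ha1nk1 : a 1 < nk1 := by
    by_contra h
    push_neg at h
    have h1 : nk1.choose (k - 2) ≤ (a 1).choose (k - 2) := Nat.choose_le_choose _ h
    have h2 : (a 1).choose (k - 1 - 1) ≤ ∑ i ∈ Finset.range s, (a i).choose (k - 1 - i) :=
      Finset.single_le_sum (f := fun i => (a i).choose (k - 1 - i))
        (fun i _ => Nat.zero_le _) (Finset.mem_range.mpr (by omega))
    rw [show k - 1 - 1 = k - 2 by omega] at h2
    omega
  set c : ℕ := if s = 3 then k - 1 else 0 with hcdef
  have hcnk : c ≤ nk := by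
    rw [hcdef]; split <;> omega
  have hBN : nk1 < nk := hlt
  have ha1B : a 1 ≤ nk1 := le_of_lt ha1nk1
  have hd : nk1 + (a 0 - a 1) ≤ nk := by omega
  refine ⟨nk + 3, CG nk nk1 (a 1) (a 0 - a 1) c, ?_, ?_⟩
  · rw [cliqueCount_eq_card, countCG nk nk1 (a 1) (a 0 - a 1) c k hBN ha1B hd hcnk hk3]
    rw [show a 1 + (a 0 - a 1) = a 0 by omega, hm_eq]
    rcases hcond with hs2 | ⟨hs3, ha2⟩
    · subst hs2
      simp only [Finset.sum_range_succ, Finset.sum_range_zero, Nat.sub_zero]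
      rw [hcdef, if_neg (by omega), show k - 1 - 1 = k - 2 by omega,
        Nat.choose_eq_zero_of_lt (by omega : 0 < k - 1)]
      omega
    · subst hs3
      simp only [Finset.sum_range_succ, Finset.sum_range_zero, Nat.sub_zero]
      rw [hcdef, if_pos rfl, show k - 1 - 1 = k - 2 by omega,
        show k - 1 - 2 = k - 3 by omega, ha2]
      simp only [Nat.choose_self]
      omega
  · rw [cliqueCount_eq_card, countCG nk nk1 (a 1) (a 0 - a 1) c (k + 1) hBN ha1B hd hcnk
      (by omega)]
    rw [show a 1 + (a 0 - a 1) = a 0 by omega]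
    rw [show k + 1 - 1 = k by omega, show k + 1 - 2 = k - 1 by omega]
    rcases hcond with hs2 | ⟨hs3, ha2⟩
    · subst hs2
      simp only [Finset.sum_range_succ, Finset.sum_range_zero, Nat.sub_zero]
      rw [hcdef, if_neg (by omega), Nat.choose_eq_zero_of_lt (by omega : 0 < k)]
      omega
    · subst hs3
      simp only [Finset.sum_range_succ, Finset.sum_range_zero, Nat.sub_zero]
      rw [hcdef, if_pos rfl, show k - 2 = k - 1 - 1 by omega]
      rw [show k - 1 - 1 = k - 2 by omega, ha2,
        Nat.choose_eq_zero_of_lt (by omega : k - 3 < k - 2),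
        Nat.choose_eq_zero_of_lt (by omega : k - 1 < k)]
      omega
end
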